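/- arXiv:2211.09870 — 7 statements merged into one kernel-verified Lean document; each statement's English description precedes it below -/
import Mathlib

section
/- Let G be a finite simple graph with vertex set {v_1, …, v_n} and let b_1, …, b_n be positive integers. Let B(G) denote the blowup of G: its vertices are v_{ij} for 1 ≤ i ≤ n, 1 ≤ j ≤ b_i, and v_{ij} is adjacent to v_{kℓ} if and only if v_i is adjacent to v_k in G. Then for every finite simple graph W with at least one vertex, t(B(G), W) ≥ t(G, W)^{b_1 b_2 ⋯ b_n}. -/
open Finset

lemma sum_pi_succ {n : ℕ} (P : Fin (n + 1) → Type) [∀ i, Fintype (P i)]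
    (F : (∀ i, P i) → ℝ) :
    ∑ f : ∀ i, P i, F f = ∑ x : P 0, ∑ f' : ∀ i : Fin n, P i.succ, F (Fin.cons x f') := by
  rw [← Equiv.sum_comp (Fin.consEquiv P) F, Fintype.sum_prod_type]
  simp [Fin.consEquiv]

lemma prod_pi_succ {n : ℕ} (P : Fin (n + 1) → Type) [∀ i, Fintype (P i)]
    (F : (∀ i, P i) → ℝ) :
    ∏ f : ∀ i, P i, F f = ∏ x : P 0, ∏ f' : ∀ i : Fin n, P i.succ, F (Fin.cons x f') := by
  rw [← Equiv.prod_comp (Fin.consEquiv P) F, Fintype.prod_prod_type]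
  simp [Fin.consEquiv]

lemma sum_fun_pow {β : Type} [Fintype β] (k : ℕ) (h : β → ℝ) :
    ∑ f : Fin k → β, ∏ j, h (f j) = (∑ y, h y) ^ k := by
  classical
  have := Finset.sum_prod_piFinset (ι := Fin k) (univ : Finset β) (fun _ y => h y)
  rw [Fintype.piFinset_univ] at this
  rw [this, Finset.prod_const, Finset.card_univ, Fintype.card_fin]

lemma key_fin {β : Type} [Fintype β] [Nonempty β] :
    ∀ (n : ℕ) (b : Fin n → ℕ), (∀ i, 0 < b i) →
      ∀ g : (Fin n → β) → ℝ, (∀ x, 0 ≤ g x) →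
      ((∑ x : Fin n → β, g x) / (Fintype.card β : ℝ) ^ n) ^ (∏ i, b i) ≤
        (∑ f : ∀ i, Fin (b i) → β, ∏ t : ∀ i, Fin (b i), g fun i => f i (t i)) /
          (Fintype.card β : ℝ) ^ (∑ i, b i)
  | 0, b, hb, g, hg => by
    have h1 : (∏ i : Fin 0, b i) = 1 := by simp
    have h2 : (∑ i : Fin 0, b i) = 0 := by simp
    rw [h1, h2, pow_one, pow_zero]
    have e1 : (∑ x : Fin 0 → β, g x) = g default := Fintype.sum_unique _
    have e2 : (∑ f : ∀ i : Fin 0, Fin (b i) → β, ∏ t : ∀ i : Fin 0, Fin (b i),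
        g fun i => f i (t i)) = g default := by
      rw [Fintype.sum_unique, Fintype.prod_unique]
      congr 1
      exact Subsingleton.elim _ _
    rw [e1, e2]
  | (n+1), b, hb, g, hg => by
    classical
    have hcB : (0:ℝ) < (Fintype.card β : ℝ) := by exact_mod_cast Fintype.card_pos
    set cB : ℝ := (Fintype.card β : ℝ) with hcBdef
    set P : ℝ := (∑ x : Fin (n+1) → β, g x) / cB ^ (n+1) with hP
    have hPnn : 0 ≤ P := div_nonneg (Finset.sum_nonneg fun x _ => hg x) (by positivity)
    set k := b 0 with hkdef
    set s' := ∑ i : Fin n, b i.succ with hs'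
    set m' := ∏ i : Fin n, b i.succ with hm'
    obtain ⟨k', hk'⟩ : ∃ k', k = k' + 1 := ⟨k - 1, (Nat.succ_pred_eq_of_pos (hb 0)).symm⟩
    obtain ⟨m'', hm''⟩ : ∃ m'', m' = m'' + 1 :=
      ⟨m' - 1, (Nat.succ_pred_eq_of_pos (Finset.prod_pos fun i _ => hb i.succ)).symm⟩
    -- the inner function
    set H : (∀ i : Fin n, Fin (b i.succ) → β) → β → ℝ := fun f' y =>
      ∏ t' : ∀ i : Fin n, Fin (b i.succ), g (Fin.cons y fun i => f' i (t' i)) with hH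
    have hHnn : ∀ f' y, 0 ≤ H f' y := fun f' y => Finset.prod_nonneg fun _ _ => hg _
    -- Step A : decompose the big sum
    have hA : (∑ f : ∀ i : Fin (n+1), Fin (b i) → β,
          ∏ t : ∀ i : Fin (n+1), Fin (b i), g fun i => f i (t i))
        = ∑ f' : ∀ i : Fin n, Fin (b i.succ) → β, (∑ y, H f' y) ^ k := by
      rw [sum_pi_succ (fun i => Fin (b i) → β)
        (fun f => ∏ t : ∀ i : Fin (n+1), Fin (b i), g fun i => f i (t i)), Finset.sum_comm]
      refine Finset.sum_congr rfl fun f' _ => ?_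
      have step1 : ∀ f₀ : Fin (b 0) → β,
          (∏ t : ∀ i : Fin (n+1), Fin (b i), g fun i => Fin.cons (α := fun i => Fin (b i) → β) f₀ f' i (t i))
            = ∏ j : Fin (b 0), H f' (f₀ j) := by
        intro f₀
        rw [prod_pi_succ (fun i => Fin (b i))
          (fun t => g fun i => Fin.cons (α := fun i => Fin (b i) → β) f₀ f' i (t i))]
        refine Finset.prod_congr rfl fun j _ => Finset.prod_congr rfl fun t' _ => ?_
        congr 1
        funext i
        induction i using Fin.cases with
        | zero => simp
        | succ i' => simp
      rw [← sum_fun_pow (b 0) (H f')]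
      exact Finset.sum_congr rfl fun f₀ _ => step1 f₀
    -- Step C : lower bound for ∑ f', ∑ y, H f' y
    set Ey : β → ℝ := fun y => (∑ x : Fin n → β, g (Fin.cons y x)) / cB ^ n with hEy
    have hEynn : ∀ y, 0 ≤ Ey y :=
      fun y => div_nonneg (Finset.sum_nonneg fun x _ => hg _) (by positivity)
    have hIH : ∀ y : β, cB ^ s' * Ey y ^ m' ≤ ∑ f' : ∀ i : Fin n, Fin (b i.succ) → β, H f' y := by
      intro y
      have := key_fin n (fun i => b i.succ) (fun i => hb i.succ) (fun x => g (Fin.cons y x))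
        (fun x => hg _)
      rw [le_div_iff₀ (by positivity)] at this
      calc cB ^ s' * Ey y ^ m' = Ey y ^ m' * cB ^ s' := mul_comm _ _
        _ ≤ ∑ f' : ∀ i : Fin n, Fin (b i.succ) → β, H f' y := this
    have hsumEy : ∑ y, Ey y = cB * P := by
      have e1 : ∑ z : Fin (n+1) → β, g z = ∑ y, ∑ x : Fin n → β, g (Fin.cons y x) :=
        sum_pi_succ (fun _ => β) g
      rw [hEy, ← Finset.sum_div, ← e1, hP]
      rw [pow_succ, mul_comm (cB ^ n) cB]
      field_simp
    have jensen2 : cB * P ^ m' ≤ ∑ y, Ey y ^ m' := by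
      have h := pow_sum_div_card_le_sum_pow (s := (univ : Finset β)) (f := Ey)
        (fun i _ => hEynn i) m''
      rw [← hm'', hsumEy, Finset.card_univ] at h
      calc cB * P ^ m' = (cB * P) ^ m' / cB ^ m'' := by
            rw [hm'', mul_pow, pow_succ]
            field_simp
            ring
        _ ≤ ∑ y, Ey y ^ m' := h
    have hC : cB ^ (s' + 1) * P ^ m' ≤
        ∑ f' : ∀ i : Fin n, Fin (b i.succ) → β, ∑ y, H f' y := by
      rw [Finset.sum_comm]
      calc cB ^ (s' + 1) * P ^ m' = cB ^ s' * (cB * P ^ m') := by ring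
        _ ≤ cB ^ s' * ∑ y, Ey y ^ m' :=
            mul_le_mul_of_nonneg_left jensen2 (by positivity)
        _ = ∑ y, cB ^ s' * Ey y ^ m' := Finset.mul_sum _ _ _
        _ ≤ ∑ y, ∑ f' : ∀ i : Fin n, Fin (b i.succ) → β, H f' y :=
            Finset.sum_le_sum fun y _ => hIH y
    -- Jensen over f'
    have hcardf' : ((Fintype.card (∀ i : Fin n, Fin (b i.succ) → β)) : ℝ) = cB ^ s' := by
      have : Fintype.card (∀ i : Fin n, Fin (b i.succ) → β) = Fintype.card β ^ s' := by
        rw [Fintype.card_pi, hs', ← Finset.prod_pow_eq_pow_sum]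
        exact Finset.prod_congr rfl fun i _ => by rw [Fintype.card_fun, Fintype.card_fin]
      rw [this]
      push_cast
      rfl
    have jensen1 : (∑ f' : ∀ i : Fin n, Fin (b i.succ) → β, ∑ y, H f' y) ^ k / cB ^ (s' * k') ≤
        ∑ f' : ∀ i : Fin n, Fin (b i.succ) → β, (∑ y, H f' y) ^ k := by
      have h := pow_sum_div_card_le_sum_pow (s := (univ : Finset (∀ i : Fin n, Fin (b i.succ) → β)))
        (f := fun f' => ∑ y, H f' y)
        (fun f' _ => Finset.sum_nonneg fun y _ => hHnn f' y) k'
      rw [← hk', Finset.card_univ, hcardf', ← pow_mul] at h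
      exact h
    -- assemble
    have hprod : ∏ i : Fin (n+1), b i = k * m' := by rw [Fin.prod_univ_succ]
    have hsum : ∑ i : Fin (n+1), b i = k + s' := by rw [Fin.sum_univ_succ]
    rw [hprod, hsum, le_div_iff₀ (by positivity), hA]
    have hfinal : P ^ (k * m') * cB ^ (k + s') = (cB ^ (s' + 1) * P ^ m') ^ k / cB ^ (s' * k') := by
      rw [mul_pow, ← pow_mul, ← pow_mul]
      have hexp : (s' + 1) * k = s' * k' + (k + s') := by rw [hk']; ring
      rw [hexp, pow_add]
      rw [mul_comm k m']
      field_simp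
      ring
    rw [hfinal]
    calc (cB ^ (s' + 1) * P ^ m') ^ k / cB ^ (s' * k')
        ≤ (∑ f' : ∀ i : Fin n, Fin (b i.succ) → β, ∑ y, H f' y) ^ k / cB ^ (s' * k') := by
          gcongr
      _ ≤ ∑ f' : ∀ i : Fin n, Fin (b i.succ) → β, (∑ y, H f' y) ^ k := jensen1

/-- The homomorphism density `t(G, W)`: the number of graph homomorphisms from `G` to `W`
divided by `|V(W)| ^ |V(G)|`. -/
noncomputable def homDensity {α β : Type} [Fintype α] [Fintype β]
    (G : SimpleGraph α) (W : SimpleGraph β) : ℝ :=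
  (Nat.card (G →g W) : ℝ) / (Fintype.card β : ℝ) ^ (Fintype.card α)

lemma key_gen {α β : Type} [Fintype α] [DecidableEq α] [Fintype β] [Nonempty β]
    (b : α → ℕ) (hb : ∀ i, 0 < b i) (g : (α → β) → ℝ) (hg : ∀ x, 0 ≤ g x) :
    ((∑ x : α → β, g x) / (Fintype.card β : ℝ) ^ (Fintype.card α)) ^ (∏ i, b i) ≤
      (∑ f : ∀ i, Fin (b i) → β, ∏ t : ∀ i, Fin (b i), g fun i => f i (t i)) /
        (Fintype.card β : ℝ) ^ (∑ i, b i) := by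
  classical
  set n := Fintype.card α with hn
  set e := Fintype.equivFin α with he
  have h := key_fin n (fun j => b (e.symm j)) (fun j => hb _)
    (fun x => g (x ∘ e)) (fun x => hg _)
  beta_reduce at h
  have e1 : ∑ x : Fin n → β, g (x ∘ e) = ∑ x : α → β, g x := by
    apply Fintype.sum_equiv (Equiv.arrowCongr e (Equiv.refl β)).symm
    intro x
    congr 1
  have e4 : (∑ f : ∀ i : α, Fin (b i) → β, ∏ t : ∀ i, Fin (b i), g fun i => f i (t i))
      = ∑ f : ∀ j : Fin n, Fin (b (e.symm j)) → β,
          ∏ t : ∀ j : Fin n, Fin (b (e.symm j)), g ((fun j => f j (t j)) ∘ e) := by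
    apply Fintype.sum_equiv (Equiv.piCongrLeft' (fun i => Fin (b i) → β) e)
    intro f
    rw [← Equiv.prod_comp (Equiv.piCongrLeft' (fun i => Fin (b i)) e)]
    refine Finset.prod_congr rfl fun t _ => ?_
    congr 1
    funext i
    exact congrArg (fun a => f a (t a)) (e.symm_apply_apply i).symm
  rw [e1, Equiv.prod_comp e.symm b, Equiv.sum_comp e.symm b, ← e4] at h
  exact h

lemma count_hom {V β : Type} [Fintype V] [DecidableEq V] [Fintype β] (H : SimpleGraph V) (W : SimpleGraph β)
    (p : (V → β) → Prop) [DecidablePred p]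
    (hp : ∀ x, p x ↔ ∀ a a', H.Adj a a' → W.Adj (x a) (x a')) :
    ((Nat.card (H →g W)) : ℝ) = ∑ x : V → β, if p x then (1:ℝ) else 0 := by
  rw [Finset.sum_boole]
  have hcard : Nat.card (H →g W) = Fintype.card {x : V → β // p x} := by
    rw [← Nat.card_eq_fintype_card]
    refine Nat.card_congr ?_
    exact
      { toFun := fun φ => ⟨φ, (hp φ).mpr fun a a' h => φ.map_rel h⟩
        invFun := fun x => ⟨x.1, fun {a a'} h => ((hp x.1).mp x.2) a a' h⟩
        left_inv := fun φ => rfl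
        right_inv := fun x => rfl }
  rw [hcard, Fintype.card_subtype]

theorem stmt_0 {α : Type} [Fintype α] [DecidableEq α] (G : SimpleGraph α)
    (b : α → ℕ) (hb : ∀ i, 0 < b i)
    (β : Type) [Fintype β] [Nonempty β] (W : SimpleGraph β) :
    homDensity (G.comap (Sigma.fst : (Σ i, Fin (b i)) → α)) W ≥
      homDensity G W ^ (∏ i, b i) := by
  classical
  rw [ge_iff_le]
  set P : (α → β) → Prop := fun x => ∀ a a', G.Adj a a' → W.Adj (x a) (x a') with hPdef
  set g : (α → β) → ℝ := fun x => if P x then 1 else 0 with hgdef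
  have hg : ∀ x, 0 ≤ g x := by
    intro x
    rw [hgdef]
    dsimp only
    split <;> norm_num
  have hGW : homDensity G W
      = (∑ x : α → β, g x) / (Fintype.card β : ℝ) ^ (Fintype.card α) := by
    unfold homDensity
    rw [count_hom G W P (fun x => Iff.rfl)]
  have hBW : homDensity (G.comap (Sigma.fst : (Σ i, Fin (b i)) → α)) W
      = (∑ f : ∀ i, Fin (b i) → β, ∏ t : ∀ i, Fin (b i), g fun i => f i (t i)) /
        (Fintype.card β : ℝ) ^ (∑ i, b i) := by
    unfold homDensity
    have hcard : Fintype.card (Σ i, Fin (b i)) = ∑ i, b i := by simp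
    rw [hcard]
    congr 1
    rw [count_hom (G.comap (Sigma.fst : (Σ i, Fin (b i)) → α)) W
      (fun z => ∀ a a', (G.comap (Sigma.fst : (Σ i, Fin (b i)) → α)).Adj a a'
        → W.Adj (z a) (z a')) (fun z => Iff.rfl)]
    apply Fintype.sum_equiv (Equiv.piCurry (fun (i : α) (_ : Fin (b i)) => β))
    intro z
    simp only [hgdef, Equiv.piCurry_apply, Sigma.curry]
    rw [Fintype.prod_boole]
    have hiff : (∀ a a', (G.comap (Sigma.fst : (Σ i, Fin (b i)) → α)).Adj a a'
          → W.Adj (z a) (z a'))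
        ↔ ∀ t : ∀ i, Fin (b i), P fun i => z ⟨i, t i⟩ := by
      constructor
      · intro hq t a a' hadj
        exact hq ⟨a, t a⟩ ⟨a', t a'⟩ hadj
      · rintro h ⟨a, j⟩ ⟨a', l⟩ hadj
        have hGadj : G.Adj a a' := hadj
        have hne : a ≠ a' := hGadj.ne
        set t : ∀ i, Fin (b i) :=
          Function.update (Function.update (fun i => ⟨0, hb i⟩) a j) a' l with ht
        have hta : t a = j := by
          rw [ht, Function.update_of_ne hne, Function.update_self]
        have hta' : t a' = l := Function.update_self _ _ _
        have hw := h t a a' hGadj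
        simpa [hta, hta'] using hw
    rw [if_congr hiff rfl rfl]
  rw [hGW, hBW]
  exact key_gen b hb g hg
end

section
/- Let G and H be finite simple graphs, where G has at least one edge. Then the following are equivalent: (i) there exists a real number c such that t(H, W) ≥ t(G, W)^c for every finite simple graph W with at least one vertex satisfying t(G, W) > 0; (ii) there exists at least one graph homomorphism from H to G. -/
/-! If `φ : H →g G`, then `H` is a subgraph of the blow-up `G.comap φ`, so
`t(H, W) ≥ t(G.comap φ, W)`. Two vertices of `G.comap φ` with the same image are non-adjacent
twins, and deleting one of them at most square-roots the density: by Cauchy–Schwarz over the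
restrictions to the other vertices, pairs of homomorphisms of the smaller graph that agree off
the surviving twin glue to homomorphisms of the larger one. Repeating this until `φ` is injective
leaves a graph isomorphic to a subgraph of `G` on fewer vertices, whose density is at least
`t(G, W)`; hence `t(H, W) ≥ t(G, W) ^ 2 ^ |V(H)|`. Conversely, `t(G, G) > 0` because of the
identity, so `t(H, G) > 0`. -/

open Fintype Function

theorem Nat.card_sq_le_card_mul_card_pairs_eq {X Z : Type*} [Finite X] [Fintype Z] (r : X → Z) :
    Nat.card X ^ 2 ≤ Fintype.card Z * Nat.card {p : X × X // r p.1 = r p.2} := by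
  let pairs : {p : X × X // r p.1 = r p.2} ≃ Σ z, {x // r x = z} × {x // r x = z} :=
    { toFun p := ⟨r p.1.1, ⟨p.1.1, rfl⟩, ⟨p.1.2, p.2.symm⟩⟩
      invFun q := ⟨(q.2.1, q.2.2), q.2.1.2.trans q.2.2.2.symm⟩
      left_inv _ := rfl
      right_inv := by rintro ⟨z, ⟨x, rfl⟩, y⟩; rfl }
  rw [← Nat.card_congr (Equiv.sigmaFiberEquiv r), Nat.card_congr pairs, Nat.card_sigma,
    Nat.card_sigma]
  simpa only [Nat.card_prod, sq, Finset.card_univ, Nat.cast_id] using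
    sq_sum_le_card_mul_sum_sq (s := Finset.univ) (f := fun z => Nat.card {x // r x = z})

section

variable {α β γ : Type} [Fintype α] [Fintype β] [Fintype γ] (W : SimpleGraph β)

theorem card_hom_le_card_pow (G : SimpleGraph α) : Nat.card (G →g W) ≤ card β ^ card α := by
  simpa only [Nat.card_fun, Nat.card_eq_fintype_card] using
    Nat.card_le_card_of_injective _ (DFunLike.coe_injective (F := G →g W))

theorem homDensity_nonneg (G : SimpleGraph α) : 0 ≤ homDensity G W := by
  unfold homDensity; positivity

theorem homDensity_le_one [Nonempty β] (G : SimpleGraph α) : homDensity G W ≤ 1 := by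
  rw [homDensity, div_le_one (by positivity)]
  exact_mod_cast card_hom_le_card_pow W G

theorem homDensity_anti {G₁ G₂ : SimpleGraph α} (h : G₁ ≤ G₂) :
    homDensity G₂ W ≤ homDensity G₁ W := by
  unfold homDensity
  gcongr
  exact Nat.card_le_card_of_injective (fun ψ : G₂ →g W => ψ.comp (.ofLE h))
    fun _ _ h => DFunLike.ext _ _ fun x => DFunLike.congr_fun h x

theorem homDensity_pos_iff_nonempty_hom [Nonempty β] (G : SimpleGraph α) :
    0 < homDensity G W ↔ Nonempty (G →g W) := by
  rw [homDensity, div_pos_iff_of_pos_right (by positivity), Nat.cast_pos, Nat.card_pos_iff]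
  exact and_iff_left inferInstance

theorem card_hom_le_card_hom_comap_mul (G : SimpleGraph α) {f : γ → α} (hf : Injective f) :
    Nat.card (G →g W) ≤ Nat.card (G.comap f →g W) * card β ^ (card α - card γ) := by
  classical
  have hcompl : card ↥(Set.range f)ᶜ = card α - card γ := by
    rw [Fintype.card_compl_set, Set.card_range_of_injective hf]
  rw [← hcompl, ← Nat.card_eq_fintype_card (α := ↥(Set.range f)ᶜ),
    ← Nat.card_eq_fintype_card (α := β), ← Nat.card_fun,
    ← Nat.card_prod]
  refine Nat.card_le_card_of_injective
    (fun ψ => (ψ.comp (.comap f G), fun a : ↥(Set.range f)ᶜ => ψ a)) fun ψ ψ' h => ?_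
  ext a
  by_cases ha : a ∈ Set.range f
  · obtain ⟨x, rfl⟩ := ha
    exact DFunLike.congr_fun (congrArg Prod.fst h) x
  · exact congrFun (congrArg Prod.snd h) ⟨a, ha⟩

theorem homDensity_le_homDensity_comap [Nonempty β] (G : SimpleGraph α) {f : γ → α}
    (hf : Injective f) : homDensity G W ≤ homDensity (G.comap f) W := by
  have hγα : card γ ≤ card α := card_le_of_injective f hf
  rw [homDensity, homDensity, div_le_div_iff₀ (by positivity) (by positivity)]
  calc (Nat.card (G →g W) : ℝ) * card β ^ card γ
      ≤ Nat.card (G.comap f →g W) * card β ^ (card α - card γ) * card β ^ card γ := by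
        gcongr
        exact_mod_cast card_hom_le_card_hom_comap_mul W G hf
    _ = Nat.card (G.comap f →g W) * card β ^ card α := by
        rw [mul_assoc, ← pow_add, Nat.sub_add_cancel hγα]

section Twins

variable [DecidableEq γ] {F : SimpleGraph γ} {v v' : γ}

theorem card_agreeing_pairs_le_card_hom_of_twins (hne : v ≠ v')
    (htwin : ∀ x, F.Adj v x ↔ F.Adj v' x) :
    Nat.card {p : (F.induce {v'}ᶜ →g W) × (F.induce {v'}ᶜ →g W) //
      p.1 ∘ Set.inclusion (Set.compl_subset_compl_of_subset (Set.subset_insert v {v'})) =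
      p.2 ∘ Set.inclusion (Set.compl_subset_compl_of_subset (Set.subset_insert v {v'}))} ≤
      Nat.card (F →g W) := by
  set ι := Set.inclusion (Set.compl_subset_compl_of_subset (Set.subset_insert v {v'}))
  let glue (ψ₁ ψ₂ : F.induce {v'}ᶜ →g W) (x : γ) : β :=
    if hx : x = v' then ψ₂ ⟨v, hne⟩ else ψ₁ ⟨x, hx⟩
  have agree {ψ₁ ψ₂ : F.induce {v'}ᶜ →g W} (h : ψ₁ ∘ ι = ψ₂ ∘ ι) {x : γ} (hx : x ≠ v')
      (hxv : x ≠ v) : ψ₁ ⟨x, hx⟩ = ψ₂ ⟨x, hx⟩ :=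
    congrFun h ⟨x, by simp [hx, hxv]⟩
  have glue_adj {ψ₁ ψ₂ : F.induce {v'}ᶜ →g W} (h : ψ₁ ∘ ι = ψ₂ ∘ ι) {a b : γ}
      (hab : F.Adj a b) : W.Adj (glue ψ₁ ψ₂ a) (glue ψ₁ ψ₂ b) := by
    have cross {b} (hb : b ≠ v') (hab : F.Adj v' b) : W.Adj (ψ₂ ⟨v, hne⟩) (ψ₁ ⟨b, hb⟩) := by
      rw [← htwin] at hab
      rw [agree h hb (F.ne_of_adj hab).symm]
      exact ψ₂.map_adj hab
    by_cases ha : a = v' <;> by_cases hb : b = v' <;>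
      simp only [glue, ha, hb, dif_pos, dif_neg, not_false_eq_true]
    · exact absurd (ha ▸ hb ▸ hab) F.irrefl
    · exact cross hb (ha ▸ hab)
    · exact (cross ha (hb ▸ hab.symm)).symm
    · exact ψ₁.map_adj hab
  refine Nat.card_le_card_of_injective (fun p => ⟨glue p.1.1 p.1.2, glue_adj p.2⟩) ?_
  rintro ⟨⟨ψ₁, ψ₂⟩, hψ⟩ ⟨⟨χ₁, χ₂⟩, hχ⟩ h
  have hglue (x : γ) : glue ψ₁ ψ₂ x = glue χ₁ χ₂ x := DFunLike.congr_fun h x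
  have h₁ : ψ₁ = χ₁ := by
    ext ⟨x, hx⟩
    simpa [glue, show x ≠ v' from hx] using hglue x
  have h₂ : ψ₂ = χ₂ := by
    ext ⟨x, hx⟩
    by_cases hxv : x = v
    · subst hxv
      simpa [glue] using hglue v'
    · rw [← agree hψ hx hxv, ← agree hχ hx hxv, h₁]
  simp [h₁, h₂]

theorem card_hom_induce_sq_le_of_twins (hne : v ≠ v')
    (htwin : ∀ x, F.Adj v x ↔ F.Adj v' x) :
    Nat.card (F.induce {v'}ᶜ →g W) ^ 2 ≤ card β ^ (card γ - 2) * Nat.card (F →g W) := by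
  have hrestrict : card (↥({v, v'}ᶜ : Set γ) → β) = card β ^ (card γ - 2) := by
    rw [Fintype.card_fun, Fintype.card_compl_set]
    simp [hne]
  refine (Nat.card_sq_le_card_mul_card_pairs_eq fun ψ : F.induce {v'}ᶜ →g W =>
    ⇑ψ ∘ Set.inclusion (Set.compl_subset_compl_of_subset (Set.subset_insert v {v'}))).trans ?_
  rw [hrestrict]
  gcongr
  exact card_agreeing_pairs_le_card_hom_of_twins W hne htwin

theorem homDensity_induce_sq_le_of_twins [Nonempty β] (hne : v ≠ v')
    (htwin : ∀ x, F.Adj v x ↔ F.Adj v' x) :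
    homDensity (F.induce {v'}ᶜ) W ^ 2 ≤ homDensity F W := by
  obtain ⟨n, hn⟩ : ∃ n, card γ = n + 2 :=
    ⟨card γ - 2, by have := Fintype.one_lt_card_iff_nontrivial.2 ⟨v, v', hne⟩; omega⟩
  have hcard : card ↥({v'}ᶜ : Set γ) = n + 1 := by
    rw [Fintype.card_compl_set]
    simp [hn]
  have hcount := card_hom_induce_sq_le_of_twins W hne htwin
  rw [hn, Nat.add_sub_cancel] at hcount
  rw [homDensity, homDensity, hcard, hn, div_pow, div_le_div_iff₀ (by positivity) (by positivity)]
  calc (Nat.card (F.induce {v'}ᶜ →g W) : ℝ) ^ 2 * card β ^ (n + 2)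
      ≤ card β ^ n * Nat.card (F →g W) * card β ^ (n + 2) := by
        gcongr
        exact_mod_cast hcount
    _ = Nat.card (F →g W) * (card β ^ (n + 1)) ^ 2 := by ring

end Twins

theorem homDensity_pow_le_homDensity_comap [Nonempty β] (G : SimpleGraph α) (f : γ → α) :
    homDensity G W ^ 2 ^ card γ ≤ homDensity (G.comap f) W := by
  induction h : card γ using Nat.strong_induction_on generalizing γ with
  | _ n ih =>
    have hG₀ := homDensity_nonneg W G
    by_cases hf : Injective f
    · calc homDensity G W ^ 2 ^ n
          ≤ homDensity G W := pow_le_of_le_one hG₀ (homDensity_le_one W G) (by positivity)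
        _ ≤ homDensity (G.comap f) W := homDensity_le_homDensity_comap W G hf
    obtain ⟨v, v', hfv, hne⟩ : ∃ v v', f v = f v' ∧ v ≠ v' := by
      simpa [Injective] using hf
    classical
    have hn : 0 < n := h ▸ card_pos_iff.2 ⟨v⟩
    have hcard : card ↥({v'}ᶜ : Set γ) = n - 1 := by
      rw [Fintype.card_compl_set]
      simp [h]
    calc homDensity G W ^ 2 ^ n = (homDensity G W ^ 2 ^ (n - 1)) ^ 2 := by
          rw [← pow_mul, ← pow_succ, Nat.sub_add_cancel hn]
      _ ≤ homDensity ((G.comap f).induce {v'}ᶜ) W ^ 2 :=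
          pow_le_pow_left₀ (pow_nonneg hG₀ _) (ih (n - 1) (by omega) (f ∘ Subtype.val) hcard) 2
      _ ≤ homDensity (G.comap f) W :=
          homDensity_induce_sq_le_of_twins W hne fun x => by simp [hfv]

theorem homDensity_pow_le_homDensity_of_hom [Nonempty β] {G : SimpleGraph α} {H : SimpleGraph γ}
    (φ : H →g G) : homDensity G W ^ 2 ^ card γ ≤ homDensity H W :=
  (homDensity_pow_le_homDensity_comap W G φ).trans (homDensity_anti W fun _ _ => φ.map_adj)

end

theorem stmt_1 {α γ : Type} [Fintype α] [Fintype γ]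
    (G : SimpleGraph α) (H : SimpleGraph γ) (hG : ∃ u v, G.Adj u v) :
    (∃ c : ℝ, ∀ (β : Type) [Fintype β] [Nonempty β] (W : SimpleGraph β),
        0 < homDensity G W → homDensity H W ≥ homDensity G W ^ c) ↔
      Nonempty (H →g G) := by
  constructor
  · rintro ⟨c, hc⟩
    obtain ⟨u, -, -⟩ := hG
    have : Nonempty α := ⟨u⟩
    have hGG : 0 < homDensity G G := (homDensity_pos_iff_nonempty_hom G G).2 ⟨.id⟩
    exact (homDensity_pos_iff_nonempty_hom G H).1
      ((Real.rpow_pos_of_pos hGG c).trans_le (hc α G hGG))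
  · rintro ⟨φ⟩
    refine ⟨(2 ^ card γ : ℕ), fun β _ _ W _ => ?_⟩
    rw [Real.rpow_natCast]
    exact homDensity_pow_le_homDensity_of_hom W φ
end

section
/- Let m be an even positive integer and n an odd positive integer. Then: (i) for every finite simple graph W with at least one vertex, t(P_n, W) ≥ t(P_m, W)^{(n+1)/m}; and (ii) for every real c < (n+1)/m there exists a finite simple graph W with t(P_m, W) > 0 and t(P_n, W) < t(P_m, W)^c. (That is, ρ(P_m, P_n) = (n+1)/m when n is odd and m is even.) -/
open Finset Matrix

/-- `P n` is the path with `n` edges (on `n + 1` vertices). -/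
def pathN (n : ℕ) : SimpleGraph (Fin (n + 1)) := SimpleGraph.pathGraph (n + 1)

namespace StmtAux

variable {β : Type} [Fintype β] [DecidableEq β]

/-- walk-functions with prescribed start -/
abbrev wfun (W : SimpleGraph β) (k : ℕ) (u : β) : Type :=
  {f : Fin (k+1) → β // (∀ i : Fin k, W.Adj (f i.castSucc) (f i.succ)) ∧ f 0 = u}

def wfunStep (W : SimpleGraph β) (k : ℕ) (u : β) :
    wfun W (k+1) u ≃ (Σ x : {x : β // W.Adj u x}, wfun W k x.1) where
  toFun f :=
    ⟨⟨f.1 1, by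
        have h := f.2.1 0
        rw [Fin.castSucc_zero, f.2.2, Fin.succ_zero_eq_one] at h
        exact h⟩,
     ⟨f.1 ∘ Fin.succ, fun i => by
        have h := f.2.1 i.succ
        rw [← Fin.succ_castSucc] at h
        exact h, rfl⟩⟩
  invFun p :=
    ⟨Fin.cons u p.2.1, fun i => by
        induction i using Fin.cases with
        | zero =>
            have hx := p.1.2
            have hg0 := p.2.2.2
            simpa [hg0] using hx
        | succ j =>
            rw [← Fin.succ_castSucc]
            simpa using p.2.2.1 j, by simp⟩
  left_inv f := by
    obtain ⟨f, hf, h0⟩ := f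
    apply Subtype.ext
    funext i
    induction i using Fin.cases with
    | zero => simpa using h0.symm
    | succ j => simp
  right_inv p := by
    obtain ⟨⟨x, hx⟩, g, hg, hg0⟩ := p
    simp only [Subtype.coe_mk] at hg0
    subst hg0
    refine Sigma.ext (Subtype.ext (by simp)) (heq_of_eq (Subtype.ext ?_))
    funext j; simp

lemma card_wfun (W : SimpleGraph β) [DecidableRel W.Adj] (k : ℕ) (u : β) :
    (Fintype.card (wfun W k u)) = ∑ v, (W.adjMatrix ℕ ^ k) u v := by
  induction k generalizing u with
  | zero =>
      rw [Fintype.card_eq_one_iff.2 ⟨⟨fun _ => u, fun i => i.elim0, rfl⟩, ?_⟩]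
      · rw [pow_zero]
        simp [Matrix.one_apply]
      · rintro ⟨f, hf, h0⟩
        apply Subtype.ext
        funext i
        rw [Fin.eq_zero i]
        simpa using h0
  | succ k ih =>
      rw [Fintype.card_congr (wfunStep W k u), Fintype.card_sigma]
      calc ∑ x : {x : β // W.Adj u x}, Fintype.card (wfun W k x.1)
          = ∑ x : {x : β // W.Adj u x}, ∑ v, (W.adjMatrix ℕ ^ k) x.1 v :=
            Finset.sum_congr rfl (fun x _ => ih x.1)
        _ = ∑ w ∈ Finset.univ.filter (fun w => W.Adj u w), ∑ v, (W.adjMatrix ℕ ^ k) w v :=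
            (Finset.sum_subtype (p := fun w => W.Adj u w)
              (Finset.univ.filter (fun w => W.Adj u w)) (fun x => by simp)
              (fun w => ∑ v, (W.adjMatrix ℕ ^ k) w v)).symm
        _ = ∑ w : β, if W.Adj u w then ∑ v, (W.adjMatrix ℕ ^ k) w v else 0 :=
            (Finset.sum_filter _ _)
        _ = ∑ v, (W.adjMatrix ℕ ^ (k+1)) u v := by
            rw [pow_succ']
            simp only [Matrix.mul_apply, SimpleGraph.adjMatrix_apply, ite_mul, one_mul, zero_mul]
            rw [Finset.sum_comm]
            refine Finset.sum_congr rfl fun w _ => ?_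
            split <;> simp



def homEquiv (W : SimpleGraph β) (k : ℕ) :
    (pathN k →g W) ≃ {f : Fin (k+1) → β // ∀ i : Fin k, W.Adj (f i.castSucc) (f i.succ)} where
  toFun φ := ⟨φ, fun i => φ.map_adj (by
    rw [pathN, SimpleGraph.pathGraph_adj]
    left
    simp)⟩
  invFun f := ⟨f.1, by
    intro u v huv
    rw [pathN, SimpleGraph.pathGraph_adj] at huv
    rcases huv with h | h
    · have hu : u.val < k := by omega
      have e1 : (⟨u.val, hu⟩ : Fin k).castSucc = u := by
        apply Fin.ext; simp
      have e2 : (⟨u.val, hu⟩ : Fin k).succ = v := by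
        apply Fin.ext; simp [h]
      rw [← e1, ← e2]
      exact f.2 _
    · have hv : v.val < k := by omega
      have e1 : (⟨v.val, hv⟩ : Fin k).castSucc = v := by
        apply Fin.ext; simp
      have e2 : (⟨v.val, hv⟩ : Fin k).succ = u := by
        apply Fin.ext; simp [h]
      rw [← e1, ← e2]
      exact (f.2 _).symm⟩
  left_inv φ := rfl
  right_inv f := rfl

lemma natcard_hom (W : SimpleGraph β) [DecidableRel W.Adj] (k : ℕ) :
    Nat.card (pathN k →g W) = ∑ u : β, ∑ v : β, (W.adjMatrix ℕ ^ k) u v := by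
  rw [Nat.card_congr (homEquiv W k)]
  have e1 : (Σ u : β, wfun W k u) ≃
      {f : Fin (k+1) → β // ∀ i : Fin k, W.Adj (f i.castSucc) (f i.succ)} :=
    (Equiv.sigmaCongrRight (fun u =>
      ((Equiv.subtypeSubtypeEquivSubtypeInter
        (p := fun f : Fin (k+1) → β => ∀ i : Fin k, W.Adj (f i.castSucc) (f i.succ))
        (q := fun f => f 0 = u)).symm))).trans
      (Equiv.sigmaFiberEquiv
        (fun g : {f : Fin (k+1) → β // ∀ i : Fin k, W.Adj (f i.castSucc) (f i.succ)} => g.1 0))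
  rw [Nat.card_eq_fintype_card, Fintype.card_congr e1.symm, Fintype.card_sigma]
  exact Finset.sum_congr rfl fun u _ => card_wfun W k u

lemma cast_pow_entry (W : SimpleGraph β) [DecidableRel W.Adj] (k : ℕ) :
    ∀ u v : β, ((W.adjMatrix ℕ ^ k) u v : ℝ) = (W.adjMatrix ℝ ^ k) u v := by
  induction k with
  | zero => intro u v; simp [Matrix.one_apply, apply_ite]
  | succ k ih =>
      intro u v
      rw [pow_succ, pow_succ]
      simp only [Matrix.mul_apply]
      rw [Nat.cast_sum]
      refine Finset.sum_congr rfl fun w _ => ?_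
      rw [Nat.cast_mul, ih u w]
      congr 1
      by_cases h : W.Adj w v <;> simp [h]

lemma natcard_hom_real (W : SimpleGraph β) [DecidableRel W.Adj] (k : ℕ) :
    (Nat.card (pathN k →g W) : ℝ) = ∑ u : β, ∑ v : β, (W.adjMatrix ℝ ^ k) u v := by
  rw [natcard_hom]
  push_cast
  exact Finset.sum_congr rfl fun u _ => Finset.sum_congr rfl fun v _ => cast_pow_entry W k u v




lemma spectral (A : Matrix β β ℝ) (hA : A.IsHermitian) :
    ∃ c lam : β → ℝ, (∀ i, 0 ≤ c i) ∧
      (∀ k : ℕ, ∑ u : β, ∑ v : β, (A ^ k) u v = ∑ i : β, c i * lam i ^ k) ∧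
      (∀ k : ℕ, (A ^ k).trace = ∑ i : β, lam i ^ k) := by
  set U : Matrix β β ℝ := (hA.eigenvectorUnitary : Matrix β β ℝ) with hU
  set lam : β → ℝ := hA.eigenvalues with hlam
  have hU1 : star U * U = 1 := by
    have := hA.eigenvectorUnitary.2
    rw [Unitary.mem_iff] at this
    exact this.1
  have hU2 : U * star U = 1 := by
    have := hA.eigenvectorUnitary.2
    rw [Unitary.mem_iff] at this
    exact this.2
  have hAeq : A = U * Matrix.diagonal lam * star U := by
    have := hA.spectral_theorem
    simpa using this
  have hcancel : ∀ X : Matrix β β ℝ, star U * (U * X) = X := fun X => by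
    rw [← mul_assoc, hU1, one_mul]
  have key : ∀ k : ℕ, A ^ k = U * Matrix.diagonal (fun i => lam i ^ k) * star U := by
    intro k
    induction k with
    | zero => simp [Matrix.diagonal_one, hU2]
    | succ k ih =>
        rw [pow_succ, ih, hAeq]
        simp only [Matrix.mul_assoc]
        rw [hcancel]
        rw [← Matrix.mul_assoc (Matrix.diagonal fun i => lam i ^ k) (Matrix.diagonal lam),
          Matrix.diagonal_mul_diagonal]
        have hfun : (fun i => lam i ^ k * lam i) = fun i => lam i ^ (k+1) := by
          funext i; rw [← pow_succ]
        rw [hfun]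
  refine ⟨fun i => (∑ u : β, U u i) ^ 2, lam, fun i => sq_nonneg _, fun k => ?_, fun k => ?_⟩
  · rw [key k]
    have hentry : ∀ u v : β, (U * Matrix.diagonal (fun i => lam i ^ k) * star U) u v
        = ∑ j : β, U u j * lam j ^ k * U v j := by
      intro u v
      rw [Matrix.mul_apply]
      refine Finset.sum_congr rfl fun j _ => ?_
      rw [Matrix.mul_diagonal, Matrix.star_apply, star_trivial]
    calc ∑ u : β, ∑ v : β, (U * Matrix.diagonal (fun i => lam i ^ k) * star U) u v
        = ∑ u : β, ∑ v : β, ∑ j : β, U u j * lam j ^ k * U v j := by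
          exact Finset.sum_congr rfl fun u _ => Finset.sum_congr rfl fun v _ => hentry u v
      _ = ∑ u : β, ∑ j : β, U u j * lam j ^ k * (∑ v : β, U v j) := by
          refine Finset.sum_congr rfl fun u _ => ?_
          rw [Finset.sum_comm]
          exact Finset.sum_congr rfl fun j _ => (Finset.mul_sum _ _ _).symm
      _ = ∑ j : β, (∑ u : β, U u j) ^ 2 * lam j ^ k := by
          rw [Finset.sum_comm]
          refine Finset.sum_congr rfl fun j _ => ?_
          have h1 : ∀ u : β, U u j * lam j ^ k * (∑ v : β, U v j)
              = U u j * (lam j ^ k * ∑ v : β, U v j) := fun u => by ring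
          rw [Finset.sum_congr rfl fun u _ => h1 u, ← Finset.sum_mul]
          ring
  · rw [key k, Matrix.trace_mul_cycle, hU1, one_mul, Matrix.trace_diagonal]


lemma isHermitian_adj (W : SimpleGraph β) [DecidableRel W.Adj] :
    (W.adjMatrix ℝ).IsHermitian := by
  ext i j
  simp [Matrix.conjTranspose_apply, SimpleGraph.adjMatrix_apply, SimpleGraph.adj_comm]

lemma entry_nonneg (W : SimpleGraph β) [DecidableRel W.Adj] (k : ℕ) (u v : β) :
    (0:ℝ) ≤ (W.adjMatrix ℝ ^ k) u v := by
  rw [← cast_pow_entry]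
  positivity

lemma core (W : SimpleGraph β) [DecidableRel W.Adj] [Nonempty β] (m n : ℕ)
    (hm : 0 < m) (hme : Even m) (hno : Odd n) :
    (∑ u : β, ∑ v : β, (W.adjMatrix ℝ ^ m) u v) ^ (n+1) ≤
      ((Fintype.card β : ℝ)) ^ (n+1) *
        (∑ u : β, ∑ v : β, (W.adjMatrix ℝ ^ n) u v) ^ m := by
  set A := W.adjMatrix ℝ with hAdef
  set S : ℕ → ℝ := fun k => ∑ u : β, ∑ v : β, (A ^ k) u v with hSdef
  set N : ℝ := (Fintype.card β : ℝ) with hNdef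
  have hN : (0:ℝ) < N := by
    rw [hNdef]; exact_mod_cast Fintype.card_pos
  have hSnn : ∀ k, 0 ≤ S k := fun k =>
    Finset.sum_nonneg fun u _ => Finset.sum_nonneg fun v _ => entry_nonneg W k u v
  have hS0 : S 0 = N := by
    rw [hSdef, hNdef]
    simp [Matrix.one_apply, Finset.sum_ite_eq]
  have hentry_le_one : ∀ u v : β, A u v ≤ 1 := by
    intro u v
    rw [hAdef, SimpleGraph.adjMatrix_apply]
    split <;> norm_num
  -- S (k+1) ≤ N * S k
  have hmono : ∀ k, S (k+1) ≤ N * S k := by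
    intro k
    have : S (k+1) = ∑ u : β, ∑ w : β, (A ^ k) u w * (∑ v : β, A w v) := by
      rw [hSdef]
      refine Finset.sum_congr rfl fun u _ => ?_
      rw [pow_succ]
      simp only [Matrix.mul_apply]
      rw [Finset.sum_comm]
      exact Finset.sum_congr rfl fun w _ => (Finset.mul_sum _ _ _).symm
    rw [this, hSdef, Finset.mul_sum]
    refine Finset.sum_le_sum fun u _ => ?_
    rw [Finset.mul_sum]
    refine Finset.sum_le_sum fun w _ => ?_
    rw [mul_comm (N : ℝ) _]
    refine mul_le_mul_of_nonneg_left ?_ (entry_nonneg W k u w)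
    calc ∑ v : β, A w v ≤ ∑ _v : β, (1:ℝ) := Finset.sum_le_sum fun v _ => hentry_le_one w v
      _ = N := by simp [hNdef]
  -- trace bound
  have htrace_le : (A ^ (n+1)).trace ≤ S n := by
    rw [Matrix.trace]
    rw [hSdef]
    refine Finset.sum_le_sum fun u _ => ?_
    rw [Matrix.diag_apply, pow_succ, Matrix.mul_apply]
    refine Finset.sum_le_sum fun w _ => ?_
    calc (A ^ n) u w * A w u ≤ (A ^ n) u w * 1 :=
          mul_le_mul_of_nonneg_left (hentry_le_one w u) (entry_nonneg W n u w)
      _ = (A ^ n) u w := mul_one _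
  obtain ⟨c, lam, hc, hsum, htr⟩ := spectral A (isHermitian_adj W)
  have hsum' : ∀ k : ℕ, S k = ∑ i : β, c i * lam i ^ k := fun k => hsum k
  have hcN : ∑ i : β, c i = N := by
    have h0 := hsum' 0
    simp only [pow_zero, mul_one] at h0
    rw [← h0, hS0]
  have hEn1 : Even (n+1) := hno.add_one
  by_cases hcase : m ≤ n + 1
  · -- Jensen / power-mean case
    have hp : (1:ℝ) ≤ ((n:ℝ)+1)/(m:ℝ) := by
      rw [le_div_iff₀ (by exact_mod_cast hm)]
      rw [one_mul]
      exact_mod_cast hcase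
    have key := Real.rpow_arith_mean_le_arith_mean_rpow Finset.univ
      (fun i => c i / N) (fun i => lam i ^ m)
      (fun i _ => div_nonneg (hc i) hN.le)
      (by rw [← Finset.sum_div, hcN, div_self hN.ne'])
      (fun i _ => hme.pow_nonneg _)
      hp
    have hconv : ∀ i : β, (lam i ^ m : ℝ) ^ (((n:ℝ)+1)/(m:ℝ)) = lam i ^ (n+1) := by
      intro i
      rw [← hme.pow_abs, ← Real.rpow_natCast |lam i| m, ← Real.rpow_mul (abs_nonneg _)]
      have h2 : (m:ℝ) * (((n:ℝ)+1)/(m:ℝ)) = ((n+1 : ℕ):ℝ) := by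
        push_cast
        field_simp
      rw [h2, Real.rpow_natCast, hEn1.pow_abs]
    have hL : ∑ i : β, c i / N * lam i ^ m = S m / N := by
      rw [hsum' m, Finset.sum_div]
      exact Finset.sum_congr rfl fun i _ => by ring
    have hR : ∑ i : β, c i / N * (lam i ^ m) ^ (((n:ℝ)+1)/(m:ℝ)) = S (n+1) / N := by
      rw [hsum' (n+1), Finset.sum_div]
      refine Finset.sum_congr rfl fun i _ => ?_
      rw [hconv i]; ring
    rw [hL, hR] at key
    have hstep : (S m / N) ^ (((n:ℝ)+1)/(m:ℝ)) ≤ S n := by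
      refine key.trans ?_
      rw [div_le_iff₀ hN]
      rw [mul_comm]
      exact hmono n
    have hxnn : (0:ℝ) ≤ S m / N := div_nonneg (hSnn m) hN.le
    have hpowm : ((S m / N) ^ (((n:ℝ)+1)/(m:ℝ))) ^ m = (S m / N) ^ (n+1) := by
      rw [← Real.rpow_natCast ((S m / N) ^ (((n:ℝ)+1)/(m:ℝ))) m, ← Real.rpow_mul hxnn]
      have h2 : (((n:ℝ)+1)/(m:ℝ)) * (m:ℝ) = ((n+1 : ℕ):ℝ) := by
        push_cast
        field_simp
      rw [h2, Real.rpow_natCast]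
    have h3 : (S m / N) ^ (n+1) ≤ (S n) ^ m := by
      rw [← hpowm]
      exact pow_le_pow_left₀ (Real.rpow_nonneg hxnn _) hstep m
    rw [div_pow] at h3
    rw [div_le_iff₀ (by positivity) ] at h3
    calc S m ^ (n+1) ≤ S n ^ m * N ^ (n+1) := h3
      _ = N ^ (n+1) * S n ^ m := by ring
  · -- large m case, via spectral radius
    push_neg at hcase
    set ρ : ℝ := Finset.univ.sup' Finset.univ_nonempty (fun i => |lam i|) with hρdef
    have hρ : ∀ i : β, |lam i| ≤ ρ := by
      intro i
      rw [hρdef]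
      exact Finset.le_sup' (fun j => |lam j|) (Finset.mem_univ i)
    obtain ⟨i0, -, hi0⟩ := Finset.exists_mem_eq_sup' Finset.univ_nonempty (fun i => |lam i|)
    have hρ0 : 0 ≤ ρ := by rw [hρdef, hi0]; exact abs_nonneg _
    have hne : n + 1 ≤ m := hcase.le
    have hEe : Even (m - (n+1)) := (Nat.even_sub hne).2 (by simp [hme, hEn1])
    have hcrux : ρ ^ (n+1) ≤ S n := by
      calc ρ ^ (n+1) = |lam i0| ^ (n+1) := by rw [hρdef, hi0]
        _ = lam i0 ^ (n+1) := hEn1.pow_abs _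
        _ ≤ ∑ i : β, lam i ^ (n+1) :=
            Finset.single_le_sum (f := fun i => lam i ^ (n+1))
              (fun i _ => hEn1.pow_nonneg _) (Finset.mem_univ i0)
        _ = (A ^ (n+1)).trace := (htr (n+1)).symm
        _ ≤ S n := htrace_le
    have hm1 : S m ≤ ρ ^ (m - (n+1)) * S (n+1) := by
      rw [hsum' m, hsum' (n+1), Finset.mul_sum]
      refine Finset.sum_le_sum fun i _ => ?_
      have hsplit : lam i ^ m = lam i ^ (m - (n+1)) * lam i ^ (n+1) := by
        rw [← pow_add, Nat.sub_add_cancel hne]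
      have h1 : lam i ^ (m - (n+1)) ≤ ρ ^ (m - (n+1)) := by
        rw [← hEe.pow_abs]
        exact pow_le_pow_left₀ (abs_nonneg _) (hρ i) _
      calc c i * lam i ^ m = (c i * lam i ^ (n+1)) * lam i ^ (m - (n+1)) := by
            rw [hsplit]; ring
        _ ≤ (c i * lam i ^ (n+1)) * ρ ^ (m - (n+1)) :=
            mul_le_mul_of_nonneg_left h1 (mul_nonneg (hc i) (hEn1.pow_nonneg _))
        _ = ρ ^ (m - (n+1)) * (c i * lam i ^ (n+1)) := by ring
    calc S m ^ (n+1) ≤ (ρ ^ (m - (n+1)) * S (n+1)) ^ (n+1) :=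
          pow_le_pow_left₀ (hSnn m) hm1 _
      _ = (ρ ^ (n+1)) ^ (m - (n+1)) * S (n+1) ^ (n+1) := by
          rw [mul_pow, ← pow_mul, ← pow_mul, Nat.mul_comm]
      _ ≤ (S n) ^ (m - (n+1)) * (N * S n) ^ (n+1) := by
          refine mul_le_mul ?_ ?_ (pow_nonneg (hSnn (n+1)) _) (pow_nonneg (hSnn n) _)
          · exact pow_le_pow_left₀ (pow_nonneg hρ0 _) hcrux _
          · exact pow_le_pow_left₀ (hSnn (n+1)) (hmono n) _
      _ = N ^ (n+1) * ((S n) ^ (m - (n+1)) * (S n) ^ (n+1)) := by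
          rw [mul_pow]; ring
      _ = N ^ (n+1) * S n ^ m := by
          rw [← pow_add, Nat.sub_add_cancel hne]

lemma density_eq (W : SimpleGraph β) [DecidableRel W.Adj] (k : ℕ) :
    homDensity (pathN k) W =
      (∑ u : β, ∑ v : β, (W.adjMatrix ℝ ^ k) u v) / (Fintype.card β : ℝ) ^ (k+1) := by
  rw [homDensity, natcard_hom_real, Fintype.card_fin]

lemma partI {β : Type} [Fintype β] [Nonempty β] (W : SimpleGraph β) (m n : ℕ)
    (hm : 0 < m) (hn : 0 < n) (hme : Even m) (hno : Odd n) :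
    homDensity (pathN n) W ≥ homDensity (pathN m) W ^ (((n : ℝ) + 1) / (m : ℝ)) := by
  classical
  set N : ℝ := (Fintype.card β : ℝ) with hNdef
  have hN : (0:ℝ) < N := by rw [hNdef]; exact_mod_cast Fintype.card_pos
  set Sm : ℝ := ∑ u : β, ∑ v : β, (W.adjMatrix ℝ ^ m) u v with hSm
  set Sn : ℝ := ∑ u : β, ∑ v : β, (W.adjMatrix ℝ ^ n) u v with hSn
  have hSmnn : 0 ≤ Sm :=
    Finset.sum_nonneg fun u _ => Finset.sum_nonneg fun v _ => entry_nonneg W m u v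
  have hSnnn : 0 ≤ Sn :=
    Finset.sum_nonneg fun u _ => Finset.sum_nonneg fun v _ => entry_nonneg W n u v
  have hcore : Sm ^ (n+1) ≤ N ^ (n+1) * Sn ^ m := core W m n hm hme hno
  have hdm : homDensity (pathN m) W = Sm / N ^ (m+1) := density_eq W m
  have hdn : homDensity (pathN n) W = Sn / N ^ (n+1) := density_eq W n
  set a : ℝ := Sm / N ^ (m+1) with hadef
  set b : ℝ := Sn / N ^ (n+1) with hbdef
  have hann : 0 ≤ a := div_nonneg hSmnn (by positivity)
  have hbnn : 0 ≤ b := div_nonneg hSnnn (by positivity)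
  have h1 : a ^ (n+1) ≤ b ^ m := by
    rw [hadef, hbdef, div_pow, div_pow, div_le_div_iff₀ (by positivity) (by positivity)]
    calc Sm ^ (n+1) * (N ^ (n+1)) ^ m ≤ (N ^ (n+1) * Sn ^ m) * (N ^ (n+1)) ^ m :=
          mul_le_mul_of_nonneg_right hcore (by positivity)
      _ = Sn ^ m * (N ^ (m+1)) ^ (n+1) := by
          rw [← pow_mul, ← pow_mul, mul_comm (N ^ (n+1)) (Sn ^ m), mul_assoc, ← pow_add,
            show (n+1) + (n+1)*m = (m+1)*(n+1) from by ring]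
  rw [hdm, hdn, ge_iff_le]
  have hpowm : (a ^ (((n:ℝ)+1)/(m:ℝ))) ^ m = a ^ (n+1) := by
    rw [← Real.rpow_natCast (a ^ (((n:ℝ)+1)/(m:ℝ))) m, ← Real.rpow_mul hann]
    have h2 : (((n:ℝ)+1)/(m:ℝ)) * (m:ℝ) = ((n+1 : ℕ):ℝ) := by
      have : (m:ℝ) ≠ 0 := by exact_mod_cast hm.ne'
      push_cast
      field_simp
    rw [h2, Real.rpow_natCast]
  have h3 : (a ^ (((n:ℝ)+1)/(m:ℝ))) ^ m ≤ b ^ m := by rw [hpowm]; exact h1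
  exact (pow_le_pow_iff_left₀ (Real.rpow_nonneg hann _) hbnn hm.ne').1 h3

/-! ### Part (ii): the star graph -/

def starG (d : ℕ) : SimpleGraph (Fin (d+1)) := SimpleGraph.fromRel (fun u _ => u = 0)

instance (d : ℕ) : DecidableRel (starG d).Adj := fun u v =>
  decidable_of_iff _ (SimpleGraph.fromRel_adj _ u v).symm

lemma starG_adj {d : ℕ} (u v : Fin (d+1)) :
    (starG d).Adj u v ↔ u ≠ v ∧ (u = 0 ∨ v = 0) := by
  rw [starG, SimpleGraph.fromRel_adj]

lemma star_nbr_zero (d : ℕ) : (starG d).neighborFinset 0 = Finset.univ.erase 0 := by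
  ext w
  simp [SimpleGraph.mem_neighborFinset, starG_adj, eq_comm, ne_comm]

lemma star_nbr_ne (d : ℕ) (v : Fin (d+1)) (hv : v ≠ 0) :
    (starG d).neighborFinset v = {0} := by
  ext w
  simp only [SimpleGraph.mem_neighborFinset, starG_adj, Finset.mem_singleton]
  constructor
  · rintro ⟨hne, h | h⟩
    · exact absurd h hv
    · exact h
  · rintro rfl
    exact ⟨hv, Or.inr rfl⟩

lemma star_pow_mulVec (d k : ℕ) :
    ((starG d).adjMatrix ℝ ^ k) *ᵥ (fun _ => (1:ℝ)) =
      fun v => if v = 0 then (d:ℝ)^((k+1)/2) else (d:ℝ)^(k/2) := by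
  induction k with
  | zero =>
      funext v
      simp [Matrix.one_mulVec]
  | succ k ih =>
      rw [pow_succ', ← Matrix.mulVec_mulVec, ih]
      funext u
      rw [SimpleGraph.adjMatrix_mulVec_apply]
      by_cases hu : u = 0
      · subst hu
        rw [star_nbr_zero]
        have hconst : ∀ w ∈ Finset.univ.erase (0 : Fin (d+1)),
            (if w = 0 then (d:ℝ)^((k+1)/2) else (d:ℝ)^(k/2)) = (d:ℝ)^(k/2) := by
          intro w hw
          rw [if_neg (Finset.ne_of_mem_erase hw)]
        rw [Finset.sum_congr rfl hconst, Finset.sum_const]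
        have hcard : (Finset.univ.erase (0 : Fin (d+1))).card = d := by
          rw [Finset.card_erase_of_mem (Finset.mem_univ _), Finset.card_univ, Fintype.card_fin]
          omega
        rw [hcard, if_pos rfl]
        have : (k+1+1)/2 = k/2 + 1 := by omega
        rw [this, pow_succ, nsmul_eq_mul]
        ring
      · rw [star_nbr_ne d u hu, Finset.sum_singleton, if_pos rfl, if_neg hu]
  
lemma star_sum (d k : ℕ) :
    ∑ u : Fin (d+1), ∑ v : Fin (d+1), ((starG d).adjMatrix ℝ ^ k) u v =
      (d:ℝ)^((k+1)/2) + d * (d:ℝ)^(k/2) := by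
  have h := star_pow_mulVec d k
  have h2 : ∀ u : Fin (d+1), ∑ v : Fin (d+1), ((starG d).adjMatrix ℝ ^ k) u v =
      (((starG d).adjMatrix ℝ ^ k) *ᵥ (fun _ => (1:ℝ))) u := by
    intro u
    simp [Matrix.mulVec, dotProduct]
  rw [Finset.sum_congr rfl (fun u _ => h2 u), h]
  rw [Fin.sum_univ_succ]
  simp only [if_pos rfl]
  congr 1
  have : ∀ i : Fin d, (if i.succ = 0 then (d:ℝ)^((k+1)/2) else (d:ℝ)^(k/2)) = (d:ℝ)^(k/2) :=
    fun i => if_neg (Fin.succ_ne_zero i)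
  rw [Finset.sum_congr rfl (fun i _ => this i), Finset.sum_const, Finset.card_univ,
    Fintype.card_fin, nsmul_eq_mul]

lemma star_density (d k : ℕ) :
    homDensity (pathN k) (starG d) =
      ((d:ℝ)^((k+1)/2) + d * (d:ℝ)^(k/2)) / ((d:ℝ)+1)^(k+1) := by
  rw [density_eq, star_sum, Fintype.card_fin]
  push_cast
  ring_nf

lemma star_tm (d m : ℕ) (hme : Even m) :
    homDensity (pathN m) (starG d) = ((d:ℝ)/((d:ℝ)+1)^2)^(m/2) := by
  obtain ⟨b, hb⟩ := hme
  subst hb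
  have h1 : (b + b + 1)/2 = b := by omega
  have h2 : (b + b)/2 = b := by omega
  rw [star_density, h1, h2]
  have hP : ((d:ℝ)+1) ≠ 0 := by positivity
  have hnum : (d:ℝ)^b + (d:ℝ) * (d:ℝ)^b = (d:ℝ)^b * ((d:ℝ)+1) := by ring
  have hexp : b + b + 1 = 2*b + 1 := by omega
  rw [div_pow, ← pow_mul, hnum, hexp, pow_succ, mul_div_mul_right _ _ hP]

lemma star_tn (d n : ℕ) (hno : Odd n) :
    homDensity (pathN n) (starG d) = 2 * ((d:ℝ)/((d:ℝ)+1)^2)^(n/2 + 1) := by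
  obtain ⟨a, ha⟩ := hno
  subst ha
  have h1 : (2*a + 1 + 1)/2 = a + 1 := by omega
  have h2 : (2*a + 1)/2 = a := by omega
  rw [star_density, h1, h2]
  have hnum : (d:ℝ)^(a+1) + (d:ℝ) * (d:ℝ)^a = 2 * (d:ℝ)^(a+1) := by ring
  have hexp : 2*a + 1 + 1 = 2*(a+1) := by omega
  rw [div_pow, ← pow_mul, hnum, hexp, mul_div_assoc]

lemma partII (m n : ℕ) (hm : 0 < m) (hn : 0 < n) (hme : Even m) (hno : Odd n)
    (c : ℝ) (hc : c < ((n : ℝ) + 1) / (m : ℝ)) :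
    ∃ (N : ℕ) (W : SimpleGraph (Fin N)), 0 < N ∧
      0 < homDensity (pathN m) W ∧
      homDensity (pathN n) W < homDensity (pathN m) W ^ c := by
  have hmR : (0:ℝ) < (m:ℝ) := by exact_mod_cast hm
  rcases le_or_gt c 0 with hc0 | hc0
  · refine ⟨2, starG 1, by norm_num, ?_, ?_⟩
    · rw [star_tm 1 m hme]
      positivity
    · have htm : homDensity (pathN m) (starG 1) = ((1:ℝ)/4)^(m/2) := by
        rw [star_tm 1 m hme]; norm_num
      have htn : homDensity (pathN n) (starG 1) = 2 * ((1:ℝ)/4)^(n/2+1) := by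
        rw [star_tn 1 n hno]; norm_num
      have h1 : (1:ℝ) ≤ homDensity (pathN m) (starG 1) ^ c := by
        rw [htm]
        refine Real.one_le_rpow_of_pos_of_le_one_of_nonpos (by positivity) ?_ hc0
        refine pow_le_one₀ (by norm_num) (by norm_num)
      have h2 : homDensity (pathN n) (starG 1) < 1 := by
        rw [htn]
        have : ((1:ℝ)/4)^(n/2+1) ≤ ((1:ℝ)/4)^1 :=
          pow_le_pow_of_le_one (by norm_num) (by norm_num) (by omega)
        nlinarith
      linarith
  · -- c > 0
    set δ : ℝ := (((n:ℝ)+1) - (m:ℝ)*c)/2 with hδdef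
    have hδ : 0 < δ := by
      have h := (lt_div_iff₀ hmR).1 hc
      rw [hδdef]
      nlinarith
    obtain ⟨x₀, hx₀⟩ := Filter.eventually_atTop.1
      ((tendsto_rpow_atTop hδ).eventually_gt_atTop (2:ℝ))
    obtain ⟨d₀, hd₀⟩ := exists_nat_ge x₀
    set d : ℕ := d₀ + 1 with hddef
    set D : ℝ := (d:ℝ) with hDdef
    set P : ℝ := D + 1 with hPdef
    have hD1 : (1:ℝ) ≤ D := by rw [hDdef, hddef]; push_cast; linarith
    have hDpos : (0:ℝ) < D := by linarith
    have hPpos : (0:ℝ) < P := by rw [hPdef]; linarith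
    have hP2 : (2:ℝ) < P ^ δ := by
      refine hx₀ P ?_
      rw [hPdef, hDdef, hddef]
      push_cast
      linarith
    set Q : ℝ := D / P^2 with hQdef
    have hQpos : 0 < Q := by rw [hQdef]; positivity
    have hPQ : P ≤ Q⁻¹ := by
      rw [hQdef, inv_div]
      rw [le_div_iff₀ hDpos]
      nlinarith
    refine ⟨d + 1, starG d, by omega, ?_, ?_⟩
    · rw [star_tm d m hme]
      rw [show ((d:ℝ)/((d:ℝ)+1)^2) = Q from rfl]
      exact pow_pos hQpos _
    · rw [star_tm d m hme, star_tn d n hno]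
      rw [show ((d:ℝ)/((d:ℝ)+1)^2) = Q from rfl]
      set α : ℝ := ((n/2 : ℕ) : ℝ) + 1 with hαdef
      set γ : ℝ := ((m/2 : ℕ) : ℝ) * c with hγdef
      have hQα : Q ^ (n/2 + 1) = Q ^ α := by
        rw [hαdef, ← Real.rpow_natCast Q (n/2 + 1)]
        push_cast
        ring_nf
      have hQγ : (Q ^ (m/2)) ^ c = Q ^ γ := by
        rw [hγdef, ← Real.rpow_natCast Q (m/2), ← Real.rpow_mul hQpos.le]
      rw [hQα, hQγ]
      have hαγ : γ = α - δ := by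
        rw [hγdef, hαdef, hδdef]
        obtain ⟨b, hb⟩ := hme
        obtain ⟨a, ha⟩ := hno
        subst hb; subst ha
        have h1 : (2*a + 1)/2 = a := by omega
        have h2 : (b + b)/2 = b := by omega
        rw [h1, h2]
        push_cast
        ring
      have hsplit : Q ^ γ = Q ^ α * (Q⁻¹) ^ δ := by
        rw [hαγ, sub_eq_add_neg, Real.rpow_add hQpos, Real.rpow_neg hQpos.le,
          ← Real.inv_rpow hQpos.le]
      rw [hsplit]
      have hQαpos : 0 < Q ^ α := Real.rpow_pos_of_pos hQpos _
      have h3 : (2:ℝ) < (Q⁻¹) ^ δ :=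
        lt_of_lt_of_le hP2 (Real.rpow_le_rpow hPpos.le hPQ hδ.le)
      calc 2 * Q ^ α < (Q⁻¹)^δ * Q ^ α := by
            exact mul_lt_mul_of_pos_right h3 hQαpos
        _ = Q ^ α * (Q⁻¹)^δ := by ring

end StmtAux

theorem stmt_5 (m n : ℕ) (hm : 0 < m) (hn : 0 < n) (hme : Even m) (hno : Odd n) :
    (∀ (β : Type) [Fintype β] [Nonempty β] (W : SimpleGraph β),
      homDensity (pathN n) W ≥ homDensity (pathN m) W ^ (((n : ℝ) + 1) / (m : ℝ))) ∧
    (∀ c : ℝ, c < ((n : ℝ) + 1) / (m : ℝ) →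
      ∃ (N : ℕ) (W : SimpleGraph (Fin N)), 0 < N ∧
        0 < homDensity (pathN m) W ∧
        homDensity (pathN n) W < homDensity (pathN m) W ^ c) := by
  constructor
  · intro β _ _ W
    exact StmtAux.partI W m n hm hn hme hno
  · intro c hc
    exact StmtAux.partII m n hm hn hme hno c hc
end

section
/- Let a, b, x, y, z be positive integers such that x and y are even and a·x + b·y = (a+b)·z. Then for every finite simple graph W with at least one vertex, t(P_x, W)^a · t(P_y, W)^b ≥ t(P_z, W)^{a+b}. -/
/-!
Writing `A` for the adjacency matrix of `W`, `hom(P_n, W) = 𝟙ᵀ Aⁿ 𝟙`, and the spectral theorem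
turns this into `∑ᵢ cᵢ λᵢⁿ` with weights `cᵢ = ⟨uᵢ, 𝟙⟩² ≥ 0`, where `(uᵢ)` is an orthonormal
eigenbasis of `A` with eigenvalues `λᵢ`. For even `x` and `y` the moments
`∑ᵢ cᵢ λᵢˣ`, `∑ᵢ cᵢ λᵢʸ` do not change when `λᵢ` is replaced by `|λᵢ|`, while `∑ᵢ cᵢ λᵢᶻ` can only
grow in absolute value; Hölder's inequality with exponents `(a+b)/a` and `(a+b)/b` then gives
`(∑ cᵢ |λᵢ|ᶻ)^(a+b) ≤ (∑ cᵢ |λᵢ|ˣ)^a (∑ cᵢ |λᵢ|ʸ)^b`. The normalising powers of `|V(W)|` agree on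
both sides since `(x+1)a + (y+1)b = (z+1)(a+b)`.
-/

open Matrix Finset SimpleGraph

lemma Real.sum_rpow_mul_rpow_le {ι : Type*} (s : Finset ι) {f g : ι → ℝ} (hf : ∀ i ∈ s, 0 ≤ f i)
    (hg : ∀ i ∈ s, 0 ≤ g i) {θ : ℝ} (hθ₀ : 0 ≤ θ) (hθ₁ : θ ≤ 1) :
    ∑ i ∈ s, f i ^ θ * g i ^ (1 - θ) ≤ (∑ i ∈ s, f i) ^ θ * (∑ i ∈ s, g i) ^ (1 - θ) := by
  obtain rfl | hθ₀ := hθ₀.eq_or_lt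
  · simp
  obtain rfl | hθ₁ := hθ₁.eq_or_lt
  · simp
  have hpq : θ⁻¹.HolderConjugate (1 - θ)⁻¹ :=
    .inv_inv hθ₀ (sub_pos.2 hθ₁) (add_sub_cancel θ 1)
  convert inner_le_Lp_mul_Lq_of_nonneg s hpq (fun i hi => rpow_nonneg (hf i hi) θ)
    (fun i hi => rpow_nonneg (hg i hi) (1 - θ)) using 3 <;>
    simp +contextual [← rpow_mul, hf, hg, hθ₀.ne', (sub_pos.2 hθ₁).ne']

lemma Real.mul_pow_rpow_mul_mul_pow_rpow {c μ θ : ℝ} (hc : 0 ≤ c) (hμ : 0 ≤ μ) (hθ₀ : 0 ≤ θ)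
    (hθ₁ : θ ≤ 1) {x y z : ℕ} (hz : (z : ℝ) = x * θ + y * (1 - θ)) :
    (c * μ ^ x) ^ θ * (c * μ ^ y) ^ (1 - θ) = c * μ ^ z := by
  rw [mul_rpow hc (by positivity), mul_rpow hc (by positivity), mul_mul_mul_comm,
    ← rpow_add' hc (by simp), add_sub_cancel, rpow_one, ← rpow_natCast, ← rpow_natCast,
    ← rpow_natCast, ← rpow_mul hμ, ← rpow_mul hμ,
    ← rpow_add_of_nonneg hμ (by positivity) (by nlinarith), hz]

lemma Real.pow_sum_mul_pow_le_pow_mul_pow {ι : Type*} (s : Finset ι) {c μ : ι → ℝ}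
    (hc : ∀ i ∈ s, 0 ≤ c i) (hμ : ∀ i ∈ s, 0 ≤ μ i) {a b x y z : ℕ}
    (h : a * x + b * y = (a + b) * z) :
    (∑ i ∈ s, c i * μ i ^ z) ^ (a + b) ≤
      (∑ i ∈ s, c i * μ i ^ x) ^ a * (∑ i ∈ s, c i * μ i ^ y) ^ b := by
  obtain hab | hab := Nat.eq_zero_or_pos (a + b)
  · simp [Nat.add_eq_zero_iff.1 hab]
  have hab' : (0 : ℝ) < a + b := by exact_mod_cast hab
  obtain ⟨θ, hθ⟩ : ∃ θ : ℝ, θ = a / (a + b) := ⟨_, rfl⟩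
  have hθ' : 1 - θ = b / (a + b) := by rw [hθ]; field_simp; ring
  have hθ₀ : 0 ≤ θ := by rw [hθ]; positivity
  have hθ₁ : θ ≤ 1 := by linarith [show 0 ≤ 1 - θ by rw [hθ']; positivity]
  have hz : (z : ℝ) = x * θ + y * (1 - θ) := by
    have h' : ((a : ℝ) + b) * z = a * x + b * y := by exact_mod_cast h.symm
    rw [hθ', hθ]; field_simp; linear_combination h'
  have hterm (n : ℕ) : ∀ i ∈ s, 0 ≤ c i * μ i ^ n := fun i hi =>
    mul_nonneg (hc i hi) (pow_nonneg (hμ i hi) n)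
  have holder := sum_rpow_mul_rpow_le s (hterm x) (hterm y) hθ₀ hθ₁
  rw [sum_congr rfl fun i hi => mul_pow_rpow_mul_mul_pow_rpow (hc i hi) (hμ i hi) hθ₀ hθ₁ hz]
    at holder
  have hpow {X t : ℝ} {m : ℕ} (hX : 0 ≤ X) (ht : t * (a + b) = m) : (X ^ t) ^ (a + b) = X ^ m := by
    rw [← rpow_natCast, ← rpow_mul hX, Nat.cast_add, ht, rpow_natCast]
  calc (∑ i ∈ s, c i * μ i ^ z) ^ (a + b)
      ≤ ((∑ i ∈ s, c i * μ i ^ x) ^ θ * (∑ i ∈ s, c i * μ i ^ y) ^ (1 - θ)) ^ (a + b) :=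
        pow_le_pow_left₀ (sum_nonneg (hterm z)) holder _
    _ = _ := by
        rw [mul_pow, hpow (sum_nonneg (hterm x)) (by rw [hθ]; field_simp),
          hpow (sum_nonneg (hterm y)) (by rw [hθ']; field_simp)]

lemma Real.pow_sum_mul_pow_le_pow_mul_pow_of_even {ι : Type*} (s : Finset ι) {c ν : ι → ℝ}
    (hc : ∀ i ∈ s, 0 ≤ c i) {a b x y z : ℕ} (hx : Even x) (hy : Even y)
    (h : a * x + b * y = (a + b) * z) :
    (∑ i ∈ s, c i * ν i ^ z) ^ (a + b) ≤
      (∑ i ∈ s, c i * ν i ^ x) ^ a * (∑ i ∈ s, c i * ν i ^ y) ^ b := by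
  have habs : |∑ i ∈ s, c i * ν i ^ z| ≤ ∑ i ∈ s, c i * |ν i| ^ z :=
    (abs_sum_le_sum_abs _ _).trans_eq <|
      sum_congr rfl fun i hi => by rw [abs_mul, abs_of_nonneg (hc i hi), abs_pow]
  have hevenx : ∑ i ∈ s, c i * ν i ^ x = ∑ i ∈ s, c i * |ν i| ^ x :=
    sum_congr rfl fun i _ => by rw [hx.pow_abs]
  have heveny : ∑ i ∈ s, c i * ν i ^ y = ∑ i ∈ s, c i * |ν i| ^ y :=
    sum_congr rfl fun i _ => by rw [hy.pow_abs]
  rw [hevenx, heveny]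
  calc (∑ i ∈ s, c i * ν i ^ z) ^ (a + b)
      ≤ |∑ i ∈ s, c i * ν i ^ z| ^ (a + b) := (le_abs_self _).trans_eq (abs_pow _ _)
    _ ≤ (∑ i ∈ s, c i * |ν i| ^ z) ^ (a + b) := pow_le_pow_left₀ (abs_nonneg _) habs _
    _ ≤ _ := pow_sum_mul_pow_le_pow_mul_pow s hc (fun i _ => abs_nonneg _) h

theorem Matrix.dotProduct_pow_mulVec_one {ι R : Type*} [Fintype ι] [DecidableEq ι]
    [CommSemiring R] (M : Matrix ι ι R) (u : ι → R) (k : ℕ) :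
    u ⬝ᵥ (M ^ k *ᵥ 1) =
      ∑ f : Fin (k + 1) → ι, u (f 0) * ∏ i : Fin k, M (f i.castSucc) (f i.succ) := by
  induction k generalizing u with
  | zero =>
    rw [← (Equiv.funUnique (Fin 1) ι).symm.sum_comp]
    simp [dotProduct]
  | succ k ih =>
    rw [pow_succ', ← mulVec_mulVec, dotProduct_mulVec, ih, ← (Fin.consEquiv fun _ => ι).sum_comp
      (fun f => u (f 0) * ∏ i : Fin (k + 1), M (f i.castSucc) (f i.succ)),
      Fintype.sum_prod_type, Finset.sum_comm]
    refine sum_congr rfl fun f _ => ?_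
    simp [Fin.prod_univ_succ, vecMul, dotProduct, sum_mul, mul_assoc, Fin.consEquiv]

lemma Matrix.IsHermitian.dotProduct_pow_mulVec {ι : Type*} [Fintype ι] [DecidableEq ι]
    {A : Matrix ι ι ℝ} (hA : A.IsHermitian) (u : ι → ℝ) (k : ℕ) :
    u ⬝ᵥ (A ^ k *ᵥ u) =
      ∑ i, (star (hA.eigenvectorUnitary : Matrix ι ι ℝ) *ᵥ u) i ^ 2 * hA.eigenvalues i ^ k := by
  set U : Matrix ι ι ℝ := (hA.eigenvectorUnitary : Matrix ι ι ℝ)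
  have hpow : A ^ k = U * diagonal (hA.eigenvalues ^ k) * star U := by
    conv_lhs => rw [hA.spectral_theorem]
    rw [← map_pow, diagonal_pow, Unitary.conjStarAlgAut_apply]
    simp [U]
  have hstar : u ᵥ* U = star U *ᵥ u := by
    rw [star_eq_conjTranspose, conjTranspose_eq_transpose_of_trivial, mulVec_transpose]
  rw [hpow, ← mulVec_mulVec, ← mulVec_mulVec, dotProduct_mulVec, hstar]
  simp only [dotProduct, mulVec_diagonal, Pi.pow_apply]
  exact sum_congr rfl fun i _ => by ring

lemma Fin.exists_castSucc_eq_and_succ_eq {n : ℕ} {u v : Fin (n + 1)} (h : u.val + 1 = v.val) :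
    ∃ i : Fin n, i.castSucc = u ∧ i.succ = v :=
  ⟨⟨u, by omega⟩, rfl, Fin.ext (by simp [h])⟩

def SimpleGraph.pathGraphHomEquiv {β : Type*} (W : SimpleGraph β) (n : ℕ) :
    (pathGraph (n + 1) →g W) ≃
      {f : Fin (n + 1) → β // ∀ i : Fin n, W.Adj (f i.castSucc) (f i.succ)} where
  toFun φ := ⟨φ, fun i => φ.map_adj (by simp [pathGraph_adj])⟩
  invFun f := ⟨f.1, fun {u v} huv => by
    rcases pathGraph_adj.1 huv with h | h
    · obtain ⟨i, rfl, rfl⟩ := Fin.exists_castSucc_eq_and_succ_eq h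
      exact f.2 i
    · obtain ⟨i, rfl, rfl⟩ := Fin.exists_castSucc_eq_and_succ_eq h
      exact (f.2 i).symm⟩
  left_inv _ := rfl
  right_inv _ := rfl

lemma SimpleGraph.card_pathGraph_hom_eq_dotProduct {β : Type*} [Fintype β] [DecidableEq β]
    (W : SimpleGraph β) [DecidableRel W.Adj] (n : ℕ) :
    (Nat.card (pathGraph (n + 1) →g W) : ℝ) = 1 ⬝ᵥ (W.adjMatrix ℝ ^ n *ᵥ 1) := by
  rw [Nat.card_congr (W.pathGraphHomEquiv n), Nat.card_eq_fintype_card, Fintype.card_subtype,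
    dotProduct_pow_mulVec_one, natCast_card_filter]
  refine sum_congr rfl fun f _ => ?_
  simp [adjMatrix_apply, prod_boole]

theorem stmt_7_general (a b x y z : ℕ) (hxe : Even x) (hye : Even y) (hsum : a * x + b * y = (a + b) * z)
    (β : Type) [Fintype β] (W : SimpleGraph β) :
    homDensity (pathN x) W ^ a * homDensity (pathN y) W ^ b ≥
      homDensity (pathN z) W ^ (a + b) := by
  classical
  have hA : (W.adjMatrix ℝ).IsHermitian := isHermitian_iff_isSymm.2 W.isSymm_adjMatrix
  have hcount : (Nat.card (pathN z →g W) : ℝ) ^ (a + b) ≤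
      (Nat.card (pathN x →g W) : ℝ) ^ a * (Nat.card (pathN y →g W) : ℝ) ^ b := by
    simp only [pathN, card_pathGraph_hom_eq_dotProduct, hA.dotProduct_pow_mulVec]
    exact Real.pow_sum_mul_pow_le_pow_mul_pow_of_even univ (fun i _ => sq_nonneg _) hxe hye hsum
  have hexp : (x + 1) * a + (y + 1) * b = (z + 1) * (a + b) := by
    rw [add_mul, add_mul, add_add_add_comm, mul_comm x, mul_comm y, hsum]; ring
  simp only [ge_iff_le, homDensity, Fintype.card_fin]
  rw [div_pow, div_pow, div_pow, div_mul_div_comm, ← pow_mul, ← pow_mul, ← pow_mul, ← pow_add,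
    hexp]
  exact div_le_div_of_nonneg_right hcount (by positivity)

theorem stmt_7 (a b x y z : ℕ) (ha : 0 < a) (hb : 0 < b) (hx : 0 < x) (hy : 0 < y)
    (hz : 0 < z) (hxe : Even x) (hye : Even y) (hsum : a * x + b * y = (a + b) * z)
    (β : Type) [Fintype β] [Nonempty β] (W : SimpleGraph β) :
    homDensity (pathN x) W ^ a * homDensity (pathN y) W ^ b ≥
      homDensity (pathN z) W ^ (a + b) :=
  stmt_7_general a b x y z hxe hye hsum β W
end

section
/- Let W be a finite simple graph with at least one vertex, let n ≥ 1 be an integer, and let β be a real number with 0 ≤ β ≤ 1. Then (1/|V(W)|^{n+1+β}) · Σ (deg_W(v_n))^β ≥ t(K_2, W)^{n+β}, where the sum ranges over all walks (v_0, v_1, …, v_n) in W, i.e., all (n+1)-tuples of vertices with v_i adjacent to v_{i+1} for each 0 ≤ i ≤ n−1, and deg_W(v) is the degree of vertex v in W. -/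
/-!
Let `w(v) = d(v₀) ∏_{i<n} d(vᵢ)⁻¹`. This is `2|E|` times the probability that the simple random
walk started from its stationary distribution `π = d / 2|E|` traces `v`, so `∑ w = 2|E|` and
under `w` every `vⱼ` is `π`-distributed. The log-sum inequality gives
`∑ w log (d(vₙ)^b / w) ≤ 2|E| log (S / 2|E|)` with `S = ∑ d(vₙ)^b`. By stationarity the left
side is `(n + b - 1) ∑ d log d`, and `∑ d log d ≥ 2|E| log (2|E| / |V|)` by convexity of
`x log x`.
-/

open scoped Classical

open Finset Real

theorem Real.sum_mul_log_div_card_le_sum_mul_log {ι : Type*} (s : Finset ι) {f : ι → ℝ}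
    (hf : ∀ i ∈ s, 0 ≤ f i) :
    (∑ i ∈ s, f i) * log ((∑ i ∈ s, f i) / #s) ≤ ∑ i ∈ s, f i * log (f i) := by
  rcases s.eq_empty_or_nonempty with rfl | hs
  · simp
  have hcard : (0 : ℝ) < #s := by exact_mod_cast hs.card_pos
  have hjensen := convexOn_mul_log.map_sum_le (t := s) (w := fun _ => (#s : ℝ)⁻¹) (p := f)
    (fun _ _ => by positivity) (by simp [hcard.ne']) hf
  simp only [smul_eq_mul, ← div_eq_inv_mul, ← sum_div] at hjensen
  rwa [div_mul_eq_mul_div, div_le_div_iff_of_pos_right hcard] at hjensen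

theorem Real.sum_mul_log_div_le_sum_mul_log_sum_div {ι : Type*} {s : Finset ι} {a g : ι → ℝ}
    (ha : ∀ i ∈ s, 0 < a i) (hg : ∀ i ∈ s, 0 < g i) :
    ∑ i ∈ s, a i * log (g i / a i) ≤
      (∑ i ∈ s, a i) * log ((∑ i ∈ s, g i) / ∑ i ∈ s, a i) := by
  rcases s.eq_empty_or_nonempty with rfl | hs
  · simp
  have hA : 0 < ∑ i ∈ s, a i := sum_pos ha hs
  have hjensen := strictConcaveOn_log_Ioi.concaveOn.le_map_sum (t := s)
    (w := fun i => a i / ∑ i ∈ s, a i) (p := fun i => g i / a i)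
    (fun i hi => (div_pos (ha i hi) hA).le) (by rw [← sum_div, div_self hA.ne'])
    (fun i hi => div_pos (hg i hi) (ha i hi))
  have havg :
      ∑ i ∈ s, (a i / ∑ i ∈ s, a i) * (g i / a i) = (∑ i ∈ s, g i) / ∑ i ∈ s, a i := by
    rw [sum_div]
    exact sum_congr rfl fun i hi => by field_simp [(ha i hi).ne']
  simp only [smul_eq_mul, havg] at hjensen
  simp only [div_mul_eq_mul_div, ← sum_div] at hjensen
  rwa [div_le_iff₀ hA, mul_comm] at hjensen

namespace SimpleGraph

variable {V : Type*} [Fintype V] (G : SimpleGraph V)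

theorem sum_sum_neighborFinset {R : Type*} [NonAssocSemiring R] (f : V → R) :
    ∑ x, ∑ u ∈ G.neighborFinset x, f u = ∑ u, (G.degree u : R) * f u := by
  simp only [neighborFinset_eq_filter, sum_filter]
  rw [sum_comm]
  refine sum_congr rfl fun u _ => ?_
  simp only [G.adj_comm _ u, ← sum_filter, sum_const, ← neighborFinset_eq_filter,
    card_neighborFinset_eq_degree, nsmul_eq_mul]

def homTopFinTwoEquivDart : ((⊤ : SimpleGraph (Fin 2)) →g G) ≃ G.Dart where
  toFun φ := ⟨(φ 0, φ 1), φ.map_adj (by simp)⟩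
  invFun d := ⟨![d.fst, d.snd], fun {a b} hab => by
    fin_cases a <;> fin_cases b <;> simp_all [d.adj, d.adj.symm]⟩
  left_inv φ := by ext i; fin_cases i <;> rfl
  right_inv d := rfl

theorem card_hom_top_fin_two :
    Nat.card ((⊤ : SimpleGraph (Fin 2)) →g G) = ∑ v, G.degree v := by
  rw [Nat.card_congr G.homTopFinTwoEquivDart, Nat.card_eq_fintype_card, dart_card_eq_sum_degrees]

noncomputable def walkTuples (n : ℕ) : Finset (Fin (n + 1) → V) :=
  univ.filter fun v => ∀ i : Fin n, G.Adj (v i.castSucc) (v i.succ)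

variable {G} {n : ℕ}

theorem snoc_mem_walkTuples_iff {v : Fin (n + 1) → V} {u : V} :
    (Fin.snoc v u : Fin (n + 2) → V) ∈ G.walkTuples (n + 1) ↔
      v ∈ G.walkTuples n ∧ G.Adj (v (Fin.last n)) u := by
  simp only [walkTuples, mem_filter, mem_univ, true_and, Fin.forall_fin_succ', Fin.succ_castSucc,
    Fin.snoc_castSucc, Fin.succ_last, Fin.snoc_last]

variable (G) in
theorem sum_walkTuples_succ {M : Type*} [AddCommMonoid M] (F : (Fin (n + 2) → V) → M) :
    ∑ v ∈ G.walkTuples (n + 1), F v =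
      ∑ v ∈ G.walkTuples n, ∑ u ∈ G.neighborFinset (v (Fin.last n)), F (Fin.snoc v u) := by
  rw [← univ_inter (G.walkTuples (n + 1)), ← sum_ite_mem, ← (Fin.snocEquiv fun _ => V).sum_comp,
    Fintype.sum_prod_type, sum_comm, ← univ_inter (G.walkTuples n), ← sum_ite_mem]
  refine sum_congr rfl fun v _ => ?_
  dsimp only [Fin.snocEquiv, Equiv.coe_fn_mk]
  simp only [snoc_mem_walkTuples_iff, neighborFinset_eq_filter, sum_filter]
  split_ifs <;> simp_all

theorem degree_pos_of_mem_walkTuples (hn : n ≠ 0) {v : Fin (n + 1) → V}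
    (hv : v ∈ G.walkTuples n) (j : Fin (n + 1)) : 0 < G.degree (v j) := by
  simp only [walkTuples, mem_filter, mem_univ, true_and] at hv
  obtain ⟨m, rfl⟩ := Nat.exists_eq_succ_of_ne_zero hn
  refine Fin.lastCases ?_ (fun i => (G.degree_pos_iff_exists_adj _).2 ⟨_, hv i⟩) j
  exact (G.degree_pos_iff_exists_adj _).2 ⟨_, (Fin.succ_last m ▸ hv (Fin.last m)).symm⟩

variable (G) in
noncomputable def walkWeight (v : Fin (n + 1) → V) : ℝ :=
  G.degree (v 0) * ∏ i : Fin n, (G.degree (v i.castSucc) : ℝ)⁻¹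

theorem walkWeight_snoc (v : Fin (n + 1) → V) (u : V) :
    G.walkWeight (Fin.snoc v u : Fin (n + 2) → V) =
      G.walkWeight v * (G.degree (v (Fin.last n)) : ℝ)⁻¹ := by
  -- `simp` cannot rewrite under `G.degree`, whose `Fintype` instance depends on the vertex
  have hv (i : Fin (n + 1)) : (Fin.snoc v u : Fin (n + 2) → V) i.castSucc = v i :=
    Fin.snoc_castSucc ..
  rw [walkWeight, walkWeight, Fin.prod_univ_castSucc, ← Fin.castSucc_zero, hv, hv,
    prod_congr rfl fun i _ => by rw [hv], mul_assoc]

theorem walkWeight_eq_zero_of_degree_last_eq_zero {v : Fin (n + 1) → V}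
    (hv : v ∈ G.walkTuples n) (hdeg : G.degree (v (Fin.last n)) = 0) : G.walkWeight v = 0 := by
  rcases n with _ | m
  · simp [walkWeight, ← hdeg]
  · exact absurd hdeg (degree_pos_of_mem_walkTuples m.succ_ne_zero hv _).ne'

theorem walkWeight_pos (hn : n ≠ 0) {v : Fin (n + 1) → V} (hv : v ∈ G.walkTuples n) :
    0 < G.walkWeight v := by
  have hdeg := degree_pos_of_mem_walkTuples hn hv
  unfold walkWeight
  exact mul_pos (by exact_mod_cast hdeg 0) (prod_pos fun i _ => by simpa using hdeg _)

theorem log_walkWeight (hn : n ≠ 0) {v : Fin (n + 1) → V} (hv : v ∈ G.walkTuples n) :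
    log (G.walkWeight v) =
      log (G.degree (v 0)) - ∑ i : Fin n, log (G.degree (v i.castSucc)) := by
  have hdeg i : (G.degree (v i) : ℝ) ≠ 0 := by
    exact_mod_cast (degree_pos_of_mem_walkTuples hn hv i).ne'
  rw [walkWeight, log_mul (hdeg 0) (prod_ne_zero_iff.2 fun i _ => inv_ne_zero (hdeg _)),
    log_prod fun i _ => inv_ne_zero (hdeg _)]
  simp only [log_inv, sum_neg_distrib, sub_eq_add_neg]

variable (G) in
theorem sum_walkWeight_mul :
    ∀ (n : ℕ) (j : Fin (n + 1)) (f : V → ℝ),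
      ∑ v ∈ G.walkTuples n, G.walkWeight v * f (v j) = ∑ u, (G.degree u : ℝ) * f u
  | 0, j, f => by
    obtain rfl := Fin.fin_one_eq_zero j
    have hwalks : G.walkTuples 0 = univ := filter_true_of_mem fun v _ i => i.elim0
    simp only [hwalks, walkWeight, univ_eq_empty, prod_empty, mul_one]
    exact Fintype.sum_equiv (Equiv.funUnique (Fin 1) V) _ _ fun v => rfl
  | n + 1, j, f => by
    rw [sum_walkTuples_succ]
    simp only [walkWeight_snoc]
    refine Fin.lastCases ?_ (fun j => ?_) j
    · simp only [Fin.snoc_last]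
      calc _ = ∑ v ∈ G.walkTuples n, G.walkWeight v * ((G.degree (v (Fin.last n)) : ℝ)⁻¹ *
              ∑ u ∈ G.neighborFinset (v (Fin.last n)), f u) := by
            simp only [mul_sum, mul_assoc]
        _ = ∑ x, (G.degree x : ℝ) * ((G.degree x : ℝ)⁻¹ * ∑ u ∈ G.neighborFinset x, f u) :=
            sum_walkWeight_mul n (Fin.last n) fun x =>
              (G.degree x : ℝ)⁻¹ * ∑ u ∈ G.neighborFinset x, f u
        _ = ∑ x, ∑ u ∈ G.neighborFinset x, f u := by
            refine sum_congr rfl fun x _ => ?_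
            rcases eq_or_ne (G.degree x) 0 with hx | hx
            · simp [← card_neighborFinset_eq_degree, card_eq_zero.1 hx]
            · rw [mul_inv_cancel_left₀ (by exact_mod_cast hx)]
        _ = _ := G.sum_sum_neighborFinset f
    · simp only [Fin.snoc_castSucc]
      rw [← sum_walkWeight_mul n j f]
      refine sum_congr rfl fun v hv => ?_
      rw [sum_const, card_neighborFinset_eq_degree, nsmul_eq_mul]
      rcases eq_or_ne (G.degree (v (Fin.last n))) 0 with hx | hx
      · simp [walkWeight_eq_zero_of_degree_last_eq_zero hv hx]
      · field_simp

variable (G) in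
theorem sum_walkWeight (n : ℕ) :
    ∑ v ∈ G.walkTuples n, G.walkWeight v = ∑ u, (G.degree u : ℝ) := by
  simpa using G.sum_walkWeight_mul n 0 fun _ => 1

variable (G) in
theorem sum_walkWeight_mul_log_rpow_div_walkWeight (hn : n ≠ 0) (b : ℝ) :
    ∑ v ∈ G.walkTuples n, G.walkWeight v *
        log ((G.degree (v (Fin.last n)) : ℝ) ^ b / G.walkWeight v) =
      (n + b - 1) * ∑ u, (G.degree u : ℝ) * log (G.degree u) := by
  set D := ∑ u, (G.degree u : ℝ) * log (G.degree u)
  have hmarginal (j : Fin (n + 1)) :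
      ∑ v ∈ G.walkTuples n, G.walkWeight v * log (G.degree (v j)) = D :=
    G.sum_walkWeight_mul n j fun x => log (G.degree x)
  calc _ = ∑ v ∈ G.walkTuples n, (b * (G.walkWeight v * log (G.degree (v (Fin.last n)))) -
          G.walkWeight v * log (G.degree (v 0)) +
          ∑ i : Fin n, G.walkWeight v * log (G.degree (v i.castSucc))) := by
        refine sum_congr rfl fun v hv => ?_
        have hdeg : (0 : ℝ) < G.degree (v (Fin.last n)) := by
          exact_mod_cast degree_pos_of_mem_walkTuples hn hv _
        rw [log_div (rpow_pos_of_pos hdeg b).ne' (walkWeight_pos hn hv).ne', log_rpow hdeg,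
          log_walkWeight hn hv, ← mul_sum]
        ring
    _ = b * D - D + n * D := by
        simp only [sum_add_distrib, sum_sub_distrib, ← mul_sum, hmarginal]
        simp only [mul_sum]
        rw [sum_comm]
        simp [hmarginal]
    _ = _ := by ring

variable (G) in
theorem sum_degree_rpow_div_card_rpow_le_sum_walkTuples (hn : n ≠ 0) {b : ℝ}
    (hnb : 1 ≤ n + b) :
    (∑ u, (G.degree u : ℝ)) ^ ((n : ℝ) + b) / (Fintype.card V : ℝ) ^ ((n : ℝ) + b - 1) ≤
      ∑ v ∈ G.walkTuples n, (G.degree (v (Fin.last n)) : ℝ) ^ b := by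
  set E := ∑ u, (G.degree u : ℝ)
  set N := (Fintype.card V : ℝ)
  set D := ∑ u, (G.degree u : ℝ) * log (G.degree u)
  set S := ∑ v ∈ G.walkTuples n, (G.degree (v (Fin.last n)) : ℝ) ^ b
  have hE_nonneg : 0 ≤ E := sum_nonneg fun u _ => Nat.cast_nonneg (G.degree u)
  rcases hE_nonneg.eq_or_lt with hE | hE
  · rw [← hE, zero_rpow (by linarith), zero_div]
    exact sum_nonneg fun v _ => rpow_nonneg (Nat.cast_nonneg _) b
  have hN : 0 < N :=
    Nat.cast_pos.2 (card_univ (α := V) ▸ card_pos.2 (nonempty_of_sum_ne_zero hE.ne'))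
  have hdeg_rpow : ∀ v ∈ G.walkTuples n, 0 < (G.degree (v (Fin.last n)) : ℝ) ^ b :=
    fun v hv => rpow_pos_of_pos (by exact_mod_cast degree_pos_of_mem_walkTuples hn hv _) b
  have hS : 0 < S := by
    refine sum_pos hdeg_rpow (nonempty_of_sum_ne_zero (f := G.walkWeight) ?_)
    rw [sum_walkWeight]
    exact hE.ne'
  have hlogsum := Real.sum_mul_log_div_le_sum_mul_log_sum_div
    (fun v hv => walkWeight_pos hn hv) hdeg_rpow
  rw [G.sum_walkWeight_mul_log_rpow_div_walkWeight hn b, sum_walkWeight] at hlogsum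
  have hgibbs : E * log (E / N) ≤ D := by
    simpa using Real.sum_mul_log_div_card_le_sum_mul_log univ fun u _ =>
      Nat.cast_nonneg (α := ℝ) (G.degree u)
  have hbound : (n + b - 1) * log (E / N) ≤ log (S / E) := by
    refine le_of_mul_le_mul_left ?_ hE
    calc E * ((n + b - 1) * log (E / N)) = (n + b - 1) * (E * log (E / N)) := by ring
      _ ≤ (n + b - 1) * D := by gcongr
      _ ≤ E * log (S / E) := hlogsum
  rw [← log_le_log_iff (by positivity) hS, log_div (by positivity) (by positivity), log_rpow hE,
    log_rpow hN]
  rw [log_div hE.ne' hN.ne', log_div hS.ne' hE.ne'] at hbound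
  linarith

end SimpleGraph

theorem stmt_12_general {β : Type} [Fintype β] [Nonempty β] (W : SimpleGraph β)
    (n : ℕ) (hn : 1 ≤ n) (b : ℝ) (hb0 : 0 ≤ b) :
    (∑ v ∈ Finset.univ.filter
        (fun v : Fin (n + 1) → β => ∀ i : Fin n, W.Adj (v i.castSucc) (v i.succ)),
        ((Finset.univ.filter fun u => W.Adj (v (Fin.last n)) u).card : ℝ) ^ b) /
      (Fintype.card β : ℝ) ^ ((n : ℝ) + 1 + b) ≥
    homDensity (⊤ : SimpleGraph (Fin 2)) W ^ ((n : ℝ) + b) := by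
  set N := (Fintype.card β : ℝ)
  set E := ∑ u, (W.degree u : ℝ)
  have hN : 0 < N := Nat.cast_pos.2 Fintype.card_pos
  have hdensity : homDensity (⊤ : SimpleGraph (Fin 2)) W = E / N ^ 2 := by
    rw [homDensity, W.card_hom_top_fin_two, Fintype.card_fin]
    push_cast
    rfl
  have hdegree (x : β) : ((univ.filter fun u => W.Adj x u).card : ℝ) = W.degree x := by
    rw [← W.card_neighborFinset_eq_degree, W.neighborFinset_eq_filter]
  have hsplit : (E / N ^ 2) ^ ((n : ℝ) + b) =
      E ^ ((n : ℝ) + b) / N ^ ((n : ℝ) + b - 1) / N ^ ((n : ℝ) + 1 + b) := by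
    rw [div_rpow (by positivity) (by positivity), div_div, ← rpow_add hN, ← rpow_natCast,
      ← rpow_mul hN.le]
    congr 2
    push_cast
    ring
  have hnb : (1 : ℝ) ≤ n + b := by
    have : (1 : ℝ) ≤ n := by exact_mod_cast hn
    linarith
  simp only [hdegree, hdensity, ge_iff_le, hsplit]
  gcongr
  exact W.sum_degree_rpow_div_card_rpow_le_sum_walkTuples (by omega) hnb

theorem stmt_12 {β : Type} [Fintype β] [Nonempty β] (W : SimpleGraph β)
    (n : ℕ) (hn : 1 ≤ n) (b : ℝ) (hb0 : 0 ≤ b) (hb1 : b ≤ 1) :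
    (∑ v ∈ Finset.univ.filter
        (fun v : Fin (n + 1) → β => ∀ i : Fin n, W.Adj (v i.castSucc) (v i.succ)),
        ((Finset.univ.filter fun u => W.Adj (v (Fin.last n)) u).card : ℝ) ^ b) /
      (Fintype.card β : ℝ) ^ ((n : ℝ) + 1 + b) ≥
    homDensity (⊤ : SimpleGraph (Fin 2)) W ^ ((n : ℝ) + b) :=
  stmt_12_general W n hn b hb0
end

section
/- Let a, b be integers with a > 1 and b > 1. Then for every finite simple graph W with at least one vertex, t(K_{a+1, b−1}, W) · t(K_{a−1, b+1}, W) ≥ t(K_{a,b}, W)^2. -/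
open Finset

open scoped Classical in
/-- Real-valued indicator of a proposition. -/
noncomputable def ind (P : Prop) : ℝ := if P then 1 else 0

open scoped Classical in
lemma ind_and (P Q : Prop) : ind (P ∧ Q) = ind P * ind Q := by
  by_cases hP : P <;> by_cases hQ : Q <;> simp [ind, hP, hQ]

lemma ind_nonneg (P : Prop) : 0 ≤ ind P := by
  unfold ind; split <;> norm_num

lemma ind_le_one (P : Prop) : ind P ≤ 1 := by
  unfold ind; split <;> norm_num

lemma ind_mul_self (P : Prop) : ind P * ind P = ind P := by
  unfold ind; split <;> norm_num

variable {β : Type} [Fintype β]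

/-- The number of pairs `(f, g)` fully cross-adjacent in `W`. -/
noncomputable def cnt (W : SimpleGraph β) (A B : ℕ) : ℝ :=
  ∑ f : Fin A → β, ∑ g : Fin B → β, ind (∀ i j, W.Adj (f i) (g j))

lemma cnt_nonneg (W : SimpleGraph β) (A B : ℕ) : 0 ≤ cnt W A B :=
  Finset.sum_nonneg fun _ _ => Finset.sum_nonneg fun _ _ => ind_nonneg _

open scoped Classical in
lemma cnt_eq (W : SimpleGraph β) (A B : ℕ) :
    (Nat.card (completeBipartiteGraph (Fin A) (Fin B) →g W) : ℝ) = cnt W A B := by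
  have e : (completeBipartiteGraph (Fin A) (Fin B) →g W) ≃
      {p : (Fin A → β) × (Fin B → β) // ∀ i j, W.Adj (p.1 i) (p.2 j)} :=
    { toFun := fun φ => ⟨(fun i => φ (.inl i), fun j => φ (.inr j)),
        fun i j => φ.map_adj (by simp)⟩
      invFun := fun p => ⟨Sum.elim p.1.1 p.1.2, by
        rintro (i | i) (j | j) h <;> simp_all
        exacts [p.2 i j, (p.2 j i).symm]⟩
      left_inv := fun φ => by
        ext x
        cases x <;> rfl
      right_inv := fun p => rfl }
  rw [Nat.card_congr e, Nat.card_eq_fintype_card, Fintype.card_subtype, cnt]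
  rw [show (filter (fun p : (Fin A → β) × (Fin B → β) => ∀ i j, W.Adj (p.1 i) (p.2 j))
      univ).card = ∑ p : (Fin A → β) × (Fin B → β),
        if ∀ i j, W.Adj (p.1 i) (p.2 j) then 1 else 0 from Finset.card_filter _ _]
  rw [Fintype.sum_prod_type]
  push_cast
  simp only [ind]
  congr! 4

lemma sum_pi_succ_s14 {n : ℕ} (h : (Fin (n + 1) → β) → ℝ) :
    ∑ f : Fin (n + 1) → β, h f = ∑ u : β, ∑ f : Fin n → β, h (Fin.cons u f) := by
  calc ∑ f : Fin (n + 1) → β, h f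
      = ∑ p : β × (Fin n → β), h (Fin.cons p.1 p.2) :=
        (Fintype.sum_equiv (Fin.consEquiv fun _ => β) (fun p => h (Fin.cons p.1 p.2)) h
          (fun p => rfl)).symm
    _ = ∑ u : β, ∑ f : Fin n → β, h (Fin.cons u f) := Fintype.sum_prod_type _

lemma sum_comm3 {γ₁ γ₂ γ₃ : Type} [Fintype γ₁] [Fintype γ₂] [Fintype γ₃]
    (F : γ₁ → γ₂ → γ₃ → ℝ) :
    ∑ a, ∑ b, ∑ c, F a b c = ∑ c, ∑ a, ∑ b, F a b c := by
  have h1 : ∑ a, ∑ b, ∑ c, F a b c = ∑ a, ∑ c, ∑ b, F a b c :=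
    Finset.sum_congr rfl fun a _ => Finset.sum_comm
  rw [h1]
  exact Finset.sum_comm

lemma sum_comm3' {γ₁ γ₂ γ₃ : Type} [Fintype γ₁] [Fintype γ₂] [Fintype γ₃]
    (F : γ₁ → γ₂ → γ₃ → ℝ) :
    ∑ a, ∑ b, ∑ c, F a b c = ∑ b, ∑ c, ∑ a, F a b c := by
  rw [Finset.sum_comm]
  exact Finset.sum_congr rfl fun b _ => Finset.sum_comm

lemma sum_comm4 {γ₁ γ₂ γ₃ γ₄ : Type} [Fintype γ₁] [Fintype γ₂] [Fintype γ₃] [Fintype γ₄]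
    (F : γ₁ → γ₂ → γ₃ → γ₄ → ℝ) :
    ∑ a, ∑ b, ∑ c, ∑ d, F a b c d = ∑ c, ∑ d, ∑ a, ∑ b, F a b c d := by
  have h1 : ∑ a, ∑ b, ∑ c, ∑ d, F a b c d = ∑ a, ∑ c, ∑ d, ∑ b, F a b c d :=
    Finset.sum_congr rfl fun a _ => sum_comm3' _
  rw [h1]
  exact sum_comm3' _

section conds
variable {W : SimpleGraph β}

lemma cond1 {A B : ℕ} (u1 u2 : β) (f : Fin A → β) (g : Fin B → β) :
    (∀ i j, W.Adj ((Fin.cons u1 (Fin.cons u2 f) : Fin (A + 1 + 1) → β) i) (g j)) ↔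
      (∀ j, W.Adj u1 (g j)) ∧ ((∀ j, W.Adj u2 (g j)) ∧ (∀ i j, W.Adj (f i) (g j))) := by
  simp only [Fin.forall_fin_succ, Fin.cons_zero, Fin.cons_succ]

lemma cond2 {A B : ℕ} (u v : β) (f : Fin A → β) (g : Fin B → β) :
    (∀ i j, W.Adj ((Fin.cons u f : Fin (A + 1) → β) i) ((Fin.cons v g : Fin (B + 1) → β) j)) ↔
      W.Adj u v ∧ ((∀ j, W.Adj u (g j)) ∧ ((∀ i, W.Adj (f i) v) ∧ (∀ i j, W.Adj (f i) (g j)))) := by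
  simp only [Fin.forall_fin_succ, Fin.cons_zero, Fin.cons_succ, forall_and]
  tauto

lemma cond3 {A B : ℕ} (v1 v2 : β) (f : Fin A → β) (g : Fin B → β) :
    (∀ i j, W.Adj (f i) ((Fin.cons v1 (Fin.cons v2 g) : Fin (B + 1 + 1) → β) j)) ↔
      (∀ i, W.Adj (f i) v1) ∧ ((∀ i, W.Adj (f i) v2) ∧ (∀ i j, W.Adj (f i) (g j))) := by
  simp only [Fin.forall_fin_succ, Fin.cons_zero, Fin.cons_succ, forall_and]

end conds

lemma cnt_key (W : SimpleGraph β) (a b : ℕ) :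
    cnt W (a + 2) (b + 2) ^ 2 ≤ cnt W (a + 2 + 1) (b + 1) * cnt W (a + 1) (b + 2 + 1) := by
  classical
  set S : (Fin (b + 1) → β) → ℝ := fun g => ∑ u : β, ind (∀ j, W.Adj u (g j)) with hS
  set T : (Fin (a + 1) → β) → ℝ := fun f => ∑ v : β, ind (∀ i, W.Adj (f i) v) with hT
  set F : ((Fin (a + 1) → β) × (Fin (b + 1) → β)) → ℝ :=
    fun p => ind (∀ i j, W.Adj (p.1 i) (p.2 j)) * S p.2 with hF
  set G : ((Fin (a + 1) → β) × (Fin (b + 1) → β)) → ℝ :=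
    fun p => ind (∀ i j, W.Adj (p.1 i) (p.2 j)) * T p.1 with hG
  have step2 : ∀ h : (Fin (a + 1 + 1) → β) → ℝ,
      ∑ f, h f = ∑ u : β, ∑ f : Fin (a + 1) → β, h (Fin.cons u f) := fun h => sum_pi_succ_s14 h
  have stepg2 : ∀ h : (Fin (b + 1 + 1) → β) → ℝ,
      ∑ g, h g = ∑ v : β, ∑ g : Fin (b + 1) → β, h (Fin.cons v g) := fun h => sum_pi_succ_s14 h
  have h1 : cnt W (a + 2 + 1) (b + 1) = ∑ p, F p ^ 2 := by
    rw [cnt, sum_pi_succ_s14]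
    simp only [step2]
    rw [sum_comm4, Fintype.sum_prod_type]
    refine Finset.sum_congr rfl fun f _ => Finset.sum_congr rfl fun g _ => ?_
    simp only [cond1, ind_and]
    rw [← Fintype.sum_mul_sum, ← Finset.sum_mul, hF]
    simp only [hS]
    rw [sq, show ∀ x y : ℝ, (x * y) * (x * y) = (x * x) * (y * y) from fun x y => by ring,
      ind_mul_self]
    ring
  have stepg3 : ∀ h : (Fin (b + 2 + 1) → β) → ℝ,
      ∑ g, h g = ∑ v : β, ∑ g : Fin (b + 2) → β, h (Fin.cons v g) := fun h => sum_pi_succ_s14 h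
  have h2 : cnt W (a + 1) (b + 2 + 1) = ∑ p, G p ^ 2 := by
    rw [cnt]
    simp only [stepg3, stepg2]
    rw [Fintype.sum_prod_type]
    refine Finset.sum_congr rfl fun f _ => ?_
    rw [sum_comm3]
    refine Finset.sum_congr rfl fun g _ => ?_
    simp only [cond3, ind_and]
    rw [← Fintype.sum_mul_sum, ← Finset.sum_mul, hG]
    simp only [hT]
    rw [sq, show ∀ x y : ℝ, (x * y) * (x * y) = (x * x) * (y * y) from fun x y => by ring,
      ind_mul_self]
    ring
  have h3 : cnt W (a + 2) (b + 2) ≤ ∑ p, F p * G p := by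
    rw [cnt, sum_pi_succ_s14]
    simp only [stepg2]
    rw [Finset.sum_comm, Fintype.sum_prod_type]
    refine Finset.sum_le_sum fun f _ => ?_
    rw [sum_comm3]
    refine Finset.sum_le_sum fun g _ => ?_
    have hrhs : F (f, g) * G (f, g)
        = ∑ u : β, ∑ v : β, (ind (∀ j, W.Adj u (g j)) * ind (∀ i, W.Adj (f i) v))
            * ind (∀ i j, W.Adj (f i) (g j)) := by
      rw [hF, hG]
      simp only [hS, hT]
      rw [mul_mul_mul_comm, ind_mul_self, Fintype.sum_mul_sum, Finset.mul_sum]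
      refine Finset.sum_congr rfl fun u _ => ?_
      rw [Finset.mul_sum]
      refine Finset.sum_congr rfl fun v _ => ?_
      ring
    rw [hrhs]
    refine Finset.sum_le_sum fun u _ => Finset.sum_le_sum fun v _ => ?_
    rw [cond2, ind_and, ind_and, ind_and]
    have hnn : (0:ℝ) ≤ ind (∀ j, W.Adj u (g j)) * (ind (∀ i, W.Adj (f i) v)
        * ind (∀ i j, W.Adj (f i) (g j))) :=
      mul_nonneg (ind_nonneg _) (mul_nonneg (ind_nonneg _) (ind_nonneg _))
    calc ind (W.Adj u v) * (ind (∀ j, W.Adj u (g j)) * (ind (∀ i, W.Adj (f i) v)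
            * ind (∀ i j, W.Adj (f i) (g j))))
        ≤ 1 * (ind (∀ j, W.Adj u (g j)) * (ind (∀ i, W.Adj (f i) v)
            * ind (∀ i j, W.Adj (f i) (g j)))) :=
          mul_le_mul_of_nonneg_right (ind_le_one _) hnn
      _ = _ := by ring
  have cs := Finset.sum_mul_sq_le_sq_mul_sq Finset.univ F G
  calc cnt W (a + 2) (b + 2) ^ 2 ≤ (∑ p, F p * G p) ^ 2 := by
        have := cnt_nonneg W (a + 2) (b + 2)
        nlinarith [h3]
    _ ≤ (∑ p, F p ^ 2) * ∑ p, G p ^ 2 := cs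
    _ = _ := by rw [h1, h2]

/-- The complete bipartite graph `K_{a,b}`. -/
def bipartite (a b : ℕ) : SimpleGraph (Fin a ⊕ Fin b) := completeBipartiteGraph (Fin a) (Fin b)

theorem stmt_14 (a b : ℕ) (ha : 1 < a) (hb : 1 < b)
    (β : Type) [Fintype β] [Nonempty β] (W : SimpleGraph β) :
    homDensity (bipartite (a + 1) (b - 1)) W * homDensity (bipartite (a - 1) (b + 1)) W ≥
      homDensity (bipartite a b) W ^ 2 := by
  obtain ⟨a', rfl⟩ : ∃ a', a = a' + 2 := ⟨a - 2, by omega⟩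
  obtain ⟨b', rfl⟩ : ∃ b', b = b' + 2 := ⟨b - 2, by omega⟩
  rw [show a' + 2 - 1 = a' + 1 from by omega, show b' + 2 - 1 = b' + 1 from by omega]
  simp only [homDensity, bipartite, Fintype.card_sum, Fintype.card_fin, cnt_eq]
  have hn : (0:ℝ) < (Fintype.card β : ℝ) := by
    exact_mod_cast Fintype.card_pos
  rw [ge_iff_le, div_pow, div_mul_div_comm, ← pow_add, ← pow_mul,
    show (a' + 2 + (b' + 2)) * 2 = a' + 2 + 1 + (b' + 1) + (a' + 1 + (b' + 2 + 1)) from by ring]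
  apply div_le_div_of_nonneg_right (cnt_key W a' b') (by positivity)
end

section
/- Let a, b, c be positive integers with c > a. For a finite simple graph W with at least one vertex, a positive integer n, and a nonnegative real x, define D(n, x, W) = (1/|V(W)|^{n+x}) · Σ_{(v_1, …, v_n) ∈ V(W)^n} |N(v_1) ∩ ⋯ ∩ N(v_n)|^x, where N(v) is the neighborhood of v in W. Then for every finite simple graph W with at least one vertex, D(c, bc/a, W) ≤ D(a, b, W)^{c/a}. (In particular, when a divides bc this says t(K_{c, bc/a}, W) ≤ t(K_{a,b}, W)^{c/a}.) -/
open scoped Classical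

/-- `D(n, x, W) = (1/|V(W)|^{n+x}) Σ_{(v_1,…,v_n) ∈ V(W)^n} |N(v_1) ∩ ⋯ ∩ N(v_n)|^x`,
the fractional-exponent analogue of `t(K_{n,x}, W)`. -/
noncomputable def fracBipDensity (n : ℕ) (x : ℝ) {β : Type} [Fintype β]
    (W : SimpleGraph β) : ℝ :=
  (∑ v : Fin n → β,
      ((Finset.univ.filter fun u => ∀ i, W.Adj (v i) u).card : ℝ) ^ x) /
    (Fintype.card β : ℝ) ^ ((n : ℝ) + x)

namespace Stmt15Aux

open scoped ENNReal
open MeasureTheory Finset Function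

section Finner

variable {δ β κ : Type} [DecidableEq δ] [Fintype δ] [Fintype β] [MeasurableSpace β]
  [MeasurableSingletonClass β]

/-- Finner's inequality (discrete-friendly form, via `lmarginal`). -/
lemma finner_lmarginal (μ : Measure β) [IsFiniteMeasure μ] (J : Finset κ)
    (S : κ → Finset δ) (w : κ → ℝ) (hw : ∀ j ∈ J, 0 ≤ w j) (s : Finset δ) :
    ∀ f : κ → (δ → β) → ℝ≥0∞,
      (∀ j ∈ J, ∀ x y : δ → β, (∀ i ∈ S j, x i = y i) → f j x = f j y) →
      (∀ i ∈ s, ∑ j ∈ J, (if i ∈ S j then w j else 0) = 1) →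
      ∀ x : δ → β,
        (∫⋯∫⁻_s, (fun v => ∏ j ∈ J, f j v ^ w j) ∂(fun _ => μ)) x
          ≤ ∏ j ∈ J, ((∫⋯∫⁻_(s ∩ S j), f j ∂(fun _ => μ)) x) ^ w j := by
  have hmeas : ∀ {γ : Type} [MeasurableSpace γ] [DiscreteMeasurableSpace γ]
      (F : γ → ℝ≥0∞), Measurable F := fun F => Measurable.of_discrete
  induction s using Finset.induction with
  | empty =>
    intro f hdep hcov x
    simp
  | @insert i s' hi IH =>
    intro f hdep hcov x
    have hsum : ∑ j ∈ J.filter (fun j => i ∈ S j), w j = 1 := by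
      rw [Finset.sum_filter]; exact hcov i (mem_insert_self _ _)
    set g : κ → (δ → β) → ℝ≥0∞ := fun j =>
      if i ∈ S j then (fun z => ∫⁻ y, f j (Function.update z i y) ∂μ) else f j with hg
    -- pointwise Hölder in the single coordinate i
    have hpt : ∀ z : δ → β,
        (∫⁻ y, ∏ j ∈ J, f j (Function.update z i y) ^ w j ∂μ)
          ≤ ∏ j ∈ J, g j z ^ w j := by
      intro z
      have hsplit : ∀ y : β, ∏ j ∈ J, f j (Function.update z i y) ^ w j
          = (∏ j ∈ J.filter (fun j => i ∈ S j), f j (Function.update z i y) ^ w j)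
            * ∏ j ∈ J.filter (fun j => ¬ i ∈ S j), f j z ^ w j := by
        intro y
        rw [← Finset.prod_filter_mul_prod_filter_not J (fun j => i ∈ S j)]
        congr 1
        refine Finset.prod_congr rfl fun j hj => ?_
        rw [Finset.mem_filter] at hj
        have : f j (Function.update z i y) = f j z := by
          refine hdep j hj.1 _ _ fun i' hi' => ?_
          exact Function.update_of_ne (fun h => hj.2 (by rwa [← h])) _ _
        rw [this]
      calc (∫⁻ y, ∏ j ∈ J, f j (Function.update z i y) ^ w j ∂μ)
          = (∫⁻ y, ∏ j ∈ J.filter (fun j => i ∈ S j),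
              f j (Function.update z i y) ^ w j ∂μ)
            * ∏ j ∈ J.filter (fun j => ¬ i ∈ S j), f j z ^ w j := by
            simp_rw [hsplit]
            exact lintegral_mul_const _ (hmeas _)
        _ ≤ (∏ j ∈ J.filter (fun j => i ∈ S j),
              (∫⁻ y, f j (Function.update z i y) ∂μ) ^ w j)
            * ∏ j ∈ J.filter (fun j => ¬ i ∈ S j), f j z ^ w j := by
            gcongr
            exact ENNReal.lintegral_prod_norm_pow_le _
              (fun j hj => (hmeas _).aemeasurable) hsum
              (fun j hj => hw j (Finset.mem_filter.mp hj).1)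
        _ = ∏ j ∈ J, g j z ^ w j := by
            rw [← Finset.prod_filter_mul_prod_filter_not J (fun j => i ∈ S j)]
            congr 1
            · exact Finset.prod_congr rfl fun j hj => by
                simp [hg, (Finset.mem_filter.mp hj).2]
            · exact Finset.prod_congr rfl fun j hj => by
                simp [hg, (Finset.mem_filter.mp hj).2]
    have hgdep : ∀ j ∈ J, ∀ x y : δ → β, (∀ i' ∈ S j, x i' = y i') → g j x = g j y := by
      intro j hj x y hxy
      by_cases hij : i ∈ S j
      · simp only [hg, hij, if_pos]
        refine lintegral_congr fun z => hdep j hj _ _ fun i' hi' => ?_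
        by_cases h : i' = i
        · subst h; simp
        · rw [Function.update_of_ne h, Function.update_of_ne h]; exact hxy i' hi'
      · simpa only [hg, hij, if_neg, if_false] using hdep j hj x y hxy
    have hgcov : ∀ i' ∈ s', ∑ j ∈ J, (if i' ∈ S j then w j else 0) = 1 :=
      fun i' hi' => hcov i' (mem_insert_of_mem hi')
    calc (∫⋯∫⁻_insert i s', (fun v => ∏ j ∈ J, f j v ^ w j) ∂(fun _ => μ)) x
        = (∫⋯∫⁻_s', (fun z => ∫⁻ y, ∏ j ∈ J, f j (Function.update z i y) ^ w j ∂μ)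
            ∂(fun _ => μ)) x := by
          rw [lmarginal_insert' _ (hmeas _) hi]
      _ ≤ (∫⋯∫⁻_s', (fun z => ∏ j ∈ J, g j z ^ w j) ∂(fun _ => μ)) x :=
          lmarginal_mono (fun z => hpt z) x
      _ ≤ ∏ j ∈ J, ((∫⋯∫⁻_(s' ∩ S j), g j ∂(fun _ => μ)) x) ^ w j :=
          IH g hgdep hgcov x
      _ = ∏ j ∈ J, ((∫⋯∫⁻_((insert i s') ∩ S j), f j ∂(fun _ => μ)) x) ^ w j := by
          refine Finset.prod_congr rfl fun j hj => ?_
          by_cases hij : i ∈ S j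
          · have h1 : (insert i s') ∩ S j = insert i (s' ∩ S j) := by
              rw [Finset.insert_inter_of_mem hij]
            have h2 : i ∉ s' ∩ S j := fun h => hi (Finset.mem_of_mem_inter_left h)
            rw [h1, lmarginal_insert' _ (hmeas _) h2]
            simp only [hg, hij, if_pos]
          · have h1 : (insert i s') ∩ S j = s' ∩ S j :=
              Finset.insert_inter_of_notMem hij
            rw [h1]
            simp only [hg, hij, if_neg, if_false]

end Finner

section Star

variable {β : Type} [Fintype β] [MeasurableSpace β] [MeasurableSingletonClass β]

lemma lintegral_count_pi {δ : Type} [DecidableEq δ] [Fintype δ] (F : (δ → β) → ℝ≥0∞) :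
    ∫⁻ v, F v ∂(Measure.pi fun _ : δ => (Measure.count : Measure β)) = ∑ v, F v := by
  rw [lintegral_fintype]
  refine Finset.sum_congr rfl fun v _ => ?_
  have h1 : ({v} : Set (δ → β)) = Set.pi Set.univ (fun i => {v i}) := by
    ext u; simp [funext_iff, Set.mem_pi]
  rw [h1, Measure.pi_pi]
  simp [Measure.count_singleton]

/-- The cyclic window embedding. -/
def emb {a c : ℕ} (h : a < c) (j : Fin c) (i : Fin a) : Fin c :=
  j + ⟨i.1, i.2.trans h⟩

lemma emb_injective {a c : ℕ} (h : a < c) (j : Fin c) : Function.Injective (emb h j) := by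
  intro i i' hii
  have h1 := add_left_cancel hii
  have h2 : i.1 = i'.1 := Fin.mk_eq_mk.mp h1
  exact Fin.ext h2

set_option maxHeartbeats 2000000 in
/-- Finner inequality specialized to the cyclic `a`-windows in `Fin c`. -/
lemma star [Nonempty β] {a c : ℕ} (ha : 0 < a) (hac : a < c)
    (g : (Fin a → β) → ℝ≥0∞) :
    ∑ v : Fin c → β, ∏ j : Fin c, g (fun i => v (emb hac j i)) ^ (a : ℝ)⁻¹
      ≤ (∑ u : Fin a → β, g u) ^ ((c : ℝ) / a) := by
  haveI : NeZero c := ⟨(ha.trans hac).ne'⟩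
  set μ : Measure β := Measure.count with hμ
  set S : Fin c → Finset (Fin c) := fun j => Finset.image (emb hac j) Finset.univ with hS
  set f : Fin c → (Fin c → β) → ℝ≥0∞ := fun j v => g (fun i => v (emb hac j i)) with hf
  have hdep : ∀ j ∈ Finset.univ, ∀ x y : Fin c → β,
      (∀ i ∈ S j, x i = y i) → f j x = f j y := by
    intro j _ x y hxy
    simp only [hf]
    congr 1
    funext i
    exact hxy _ (Finset.mem_image_of_mem _ (Finset.mem_univ i))
  have hcov : ∀ i ∈ (Finset.univ : Finset (Fin c)),
      ∑ j : Fin c, (if i ∈ S j then (a : ℝ)⁻¹ else 0) = 1 := by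
    intro i _
    rw [← Finset.sum_filter, Finset.sum_const, nsmul_eq_mul]
    have hcard : (Finset.univ.filter fun j => i ∈ S j)
        = Finset.image (fun i' : Fin a => i - ⟨i'.1, i'.2.trans hac⟩) Finset.univ := by
      ext j
      simp only [Finset.mem_filter, Finset.mem_univ, true_and, hS, Finset.mem_image]
      constructor
      · rintro ⟨i', hi'⟩
        exact ⟨i', by rw [← hi']; simp [emb]⟩
      · rintro ⟨i', hi'⟩
        exact ⟨i', by rw [← hi']; simp [emb]⟩
    rw [hcard, Finset.card_image_of_injective _ (fun i1 i2 h12 => by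
      have h1 := sub_right_injective h12
      have h2 : i1.1 = i2.1 := Fin.mk_eq_mk.mp h1
      exact Fin.ext h2)]
    simp only [Finset.card_univ, Fintype.card_fin]
    field_simp
  obtain ⟨x0⟩ : Nonempty (Fin c → β) := inferInstance
  have hmain := finner_lmarginal (μ := μ) Finset.univ S (fun _ => (a : ℝ)⁻¹)
      (fun j _ => by positivity) Finset.univ f hdep hcov x0
  have hL : (∫⋯∫⁻_Finset.univ, (fun v => ∏ j ∈ Finset.univ, f j v ^ (a : ℝ)⁻¹)
      ∂(fun _ => μ)) x0 = ∑ v : Fin c → β, ∏ j : Fin c, f j v ^ (a : ℝ)⁻¹ := by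
    rw [lmarginal_univ]
    exact lintegral_count_pi _
  have hR : ∀ j : Fin c, (∫⋯∫⁻_(Finset.univ ∩ S j), f j ∂(fun _ => μ)) x0
      = ∑ u : Fin a → β, g u := by
    intro j
    rw [Finset.univ_inter]
    have himg := lmarginal_image (μ := fun _ : Fin c => μ) (e := emb hac j)
      (emb_injective hac j) Finset.univ (f := g) Measurable.of_discrete x0
    calc (∫⋯∫⁻_(S j), f j ∂(fun _ => μ)) x0
        = (∫⋯∫⁻_(Finset.univ.image (emb hac j)), g ∘ (· ∘' emb hac j)
            ∂(fun _ => μ)) x0 := rfl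
      _ = (∫⋯∫⁻_Finset.univ, g ∂((fun _ => μ) ∘' emb hac j)) (x0 ∘' emb hac j) := himg
      _ = ∑ u : Fin a → β, g u := by
          rw [lmarginal_univ]
          exact lintegral_count_pi _
  rw [hL] at hmain
  refine le_trans hmain ?_
  have : ∏ j : Fin c, ((∫⋯∫⁻_(Finset.univ ∩ S j), f j ∂(fun _ => μ)) x0) ^ (a : ℝ)⁻¹
      = ((∑ u : Fin a → β, g u) ^ (a : ℝ)⁻¹) ^ (c : ℕ) := by
    rw [Finset.prod_congr rfl fun j _ => by rw [hR j]]
    rw [Finset.prod_const, Finset.card_univ, Fintype.card_fin]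
  rw [this, ← ENNReal.rpow_natCast _ c, ← ENNReal.rpow_mul,
    show (a : ℝ)⁻¹ * (c : ℕ) = (c : ℝ) / a by push_cast; ring]

end Star

section Core

variable {β : Type} [Fintype β] [MeasurableSpace β] [MeasurableSingletonClass β] [Nonempty β]

lemma core (a b c : ℕ) (ha : 0 < a) (hb : 0 < b) (hac : a < c) (W : SimpleGraph β) :
    ∑ v : Fin c → β,
        (((Finset.univ.filter fun u => ∀ i, W.Adj (v i) u).card : ℕ) : ℝ≥0∞) ^ ((b : ℝ) * c / a)
      ≤ (∑ u : Fin a → β,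
          (((Finset.univ.filter fun z => ∀ i, W.Adj (u i) z).card : ℕ) : ℝ≥0∞) ^ (b : ℝ))
          ^ ((c : ℝ) / a) := by
  set g : (Fin a → β) → ℝ≥0∞ := fun u =>
    (((Finset.univ.filter fun z => ∀ i, W.Adj (u i) z).card : ℕ) : ℝ≥0∞) ^ (b : ℝ) with hgdef
  have ha' : (a : ℝ) ≠ 0 := Nat.cast_ne_zero.mpr ha.ne'
  have hptwise : ∀ v : Fin c → β,
      (((Finset.univ.filter fun u => ∀ i, W.Adj (v i) u).card : ℕ) : ℝ≥0∞) ^ ((b : ℝ) * c / a)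
        ≤ ∏ j : Fin c, g (fun i => v (emb hac j i)) ^ (a : ℝ)⁻¹ := by
    intro v
    set t : ℝ := (b : ℝ) / a with htdef
    have ht : 0 ≤ t := by positivity
    have hmono : ∀ j : Fin c,
        (((Finset.univ.filter fun u => ∀ i, W.Adj (v i) u).card : ℕ) : ℝ≥0∞)
          ≤ (((Finset.univ.filter fun z =>
              ∀ i, W.Adj ((fun i' => v (emb hac j i')) i) z).card : ℕ) : ℝ≥0∞) := by
      intro j
      refine Nat.cast_le.mpr (Finset.card_le_card ?_)
      intro u hu
      simp only [Finset.mem_filter] at hu ⊢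
      exact ⟨hu.1, fun i => hu.2 _⟩
    calc (((Finset.univ.filter fun u => ∀ i, W.Adj (v i) u).card : ℕ) : ℝ≥0∞) ^ ((b : ℝ) * c / a)
        = ∏ j : Fin c,
            (((Finset.univ.filter fun u => ∀ i, W.Adj (v i) u).card : ℕ) : ℝ≥0∞) ^ t := by
          rw [Finset.prod_const, Finset.card_univ, Fintype.card_fin, ← ENNReal.rpow_natCast _ c,
            ← ENNReal.rpow_mul, htdef]
          congr 1
          push_cast
          ring
      _ ≤ ∏ j : Fin c, (((Finset.univ.filter fun z =>
            ∀ i, W.Adj ((fun i' => v (emb hac j i')) i) z).card : ℕ) : ℝ≥0∞) ^ t :=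
          Finset.prod_le_prod' fun j _ => ENNReal.rpow_le_rpow (hmono j) ht
      _ = ∏ j : Fin c, g (fun i => v (emb hac j i)) ^ (a : ℝ)⁻¹ := by
          refine Finset.prod_congr rfl fun j _ => ?_
          rw [hgdef]
          rw [← ENNReal.rpow_mul, htdef, div_eq_mul_inv]
  exact le_trans (Finset.sum_le_sum fun v _ => hptwise v) (star ha hac g)

end Core


end Stmt15Aux

open scoped ENNReal in
theorem stmt_15 (a b c : ℕ) (ha : 0 < a) (hb : 0 < b) (hc : 0 < c) (hca : a < c)
    (β : Type) [Fintype β] [Nonempty β] (W : SimpleGraph β) :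
    fracBipDensity c (((b : ℝ) * c) / a) W ≤ fracBipDensity a (b : ℝ) W ^ ((c : ℝ) / a) := by
  letI : MeasurableSpace β := ⊤
  haveI : MeasurableSingletonClass β := ⟨fun _ => MeasurableSpace.measurableSet_top⟩
  have ha' : (a : ℝ) ≠ 0 := Nat.cast_ne_zero.mpr ha.ne'
  have hN : (0 : ℝ) < (Fintype.card β : ℝ) := by
    exact_mod_cast Fintype.card_pos
  unfold fracBipDensity
  have hy : (0 : ℝ) ≤ (b : ℝ) * c / a := by positivity
  -- the main inequality between numerators
  have hkey : (∑ v : Fin c → β,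
        ((Finset.univ.filter fun u => ∀ i, W.Adj (v i) u).card : ℝ) ^ ((b : ℝ) * c / a))
      ≤ (∑ u : Fin a → β,
          ((Finset.univ.filter fun z => ∀ i, W.Adj (u i) z).card : ℝ) ^ (b : ℝ))
          ^ ((c : ℝ) / a) := by
    have hcore := Stmt15Aux.core a b c ha hb hca W
    have hAne : (∑ v : Fin c → β,
        (((Finset.univ.filter fun u => ∀ i, W.Adj (v i) u).card : ℕ) : ℝ≥0∞)
          ^ ((b : ℝ) * c / a)) ≠ ⊤ := by
      refine ENNReal.sum_ne_top.mpr fun v _ => ?_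
      exact ENNReal.rpow_ne_top_of_nonneg hy (ENNReal.natCast_ne_top _)
    have hBne : (∑ u : Fin a → β,
        (((Finset.univ.filter fun z => ∀ i, W.Adj (u i) z).card : ℕ) : ℝ≥0∞)
          ^ (b : ℝ)) ≠ ⊤ := by
      refine ENNReal.sum_ne_top.mpr fun u _ => ?_
      exact ENNReal.rpow_ne_top_of_nonneg (by positivity) (ENNReal.natCast_ne_top _)
    have hmono := (ENNReal.toReal_le_toReal hAne
      (ENNReal.rpow_ne_top_of_nonneg (by positivity) hBne)).mpr hcore
    calc (∑ v : Fin c → β,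
          ((Finset.univ.filter fun u => ∀ i, W.Adj (v i) u).card : ℝ) ^ ((b : ℝ) * c / a))
        = (∑ v : Fin c → β,
            (((Finset.univ.filter fun u => ∀ i, W.Adj (v i) u).card : ℕ) : ℝ≥0∞)
              ^ ((b : ℝ) * c / a)).toReal := by
          rw [ENNReal.toReal_sum (fun v _ =>
            ENNReal.rpow_ne_top_of_nonneg hy (ENNReal.natCast_ne_top _))]
          refine Finset.sum_congr rfl fun v _ => ?_
          rw [← ENNReal.toReal_rpow, ENNReal.toReal_natCast]
      _ ≤ ((∑ u : Fin a → β,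
            (((Finset.univ.filter fun z => ∀ i, W.Adj (u i) z).card : ℕ) : ℝ≥0∞)
              ^ (b : ℝ)) ^ ((c : ℝ) / a)).toReal := hmono
      _ = (∑ u : Fin a → β,
            ((Finset.univ.filter fun z => ∀ i, W.Adj (u i) z).card : ℝ) ^ (b : ℝ))
            ^ ((c : ℝ) / a) := by
          rw [← ENNReal.toReal_rpow]
          congr 1
          rw [ENNReal.toReal_sum (fun u _ =>
            ENNReal.rpow_ne_top_of_nonneg (by positivity) (ENNReal.natCast_ne_top _))]
          refine Finset.sum_congr rfl fun u _ => ?_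
          rw [← ENNReal.toReal_rpow, ENNReal.toReal_natCast]
  -- nonnegativity of the second numerator
  have hBnn : (0 : ℝ) ≤ ∑ u : Fin a → β,
      ((Finset.univ.filter fun z => ∀ i, W.Adj (u i) z).card : ℝ) ^ (b : ℝ) := by
    refine Finset.sum_nonneg fun u _ => Real.rpow_nonneg (by positivity) _
  rw [Real.div_rpow hBnn (Real.rpow_nonneg hN.le _), ← Real.rpow_mul hN.le,
    show ((a : ℝ) + b) * ((c : ℝ) / a) = (c : ℝ) + (b : ℝ) * c / a by field_simp]
  exact (div_le_div_iff_of_pos_right (Real.rpow_pos_of_pos hN _)).mpr hkey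
end
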